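/- arXiv:2104.10654 — 6 statements merged into one kernel-verified Lean document; each statement's English description precedes it below -/
import Mathlib

section
/- Let Γ be a connected graph with vertex set V and path metric d, let f be a 2-selector of Γ, and define a ≺ b iff a ≠ b and f({a,b}) = a. Let r be a natural number such that d_H(A,B) ≤ 1 implies d(f(A),f(B)) ≤ r for all two-element sets A,B. Then for all v, a, b ∈ V and p > 0 with d(a,b) ≤ p, d(v,a) > p + r, d(v,b) > p + r: if a ≺ v then b ≺ v. -/
/-- Hausdorff distance (in the path metric `d`) between the two-element sets
`{a,b}` and `{c,e}`. -/
def pairHdist {V : Type*} (d : V → V → ℕ) (a b c e : V) : ℕ :=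
  max (max (min (d a c) (d a e)) (min (d b c) (d b e)))
      (max (min (d a c) (d b c)) (min (d a e) (d b e)))

/-- A 2-selector of a graph: a choice `f {a,b} ∈ {a,b}` (presented symmetrically)
which is macro-uniform with respect to the Hausdorff metric on two-element sets. -/
def IsTwoSelector {V : Type*} (G : SimpleGraph V) (f : V → V → V) : Prop :=
  (∀ a b, f a b = f b a) ∧ (∀ a b, f a b = a ∨ f a b = b) ∧
  (∀ r : ℕ, ∃ r' : ℕ, ∀ a b c e,
      pairHdist G.dist a b c e ≤ r → G.dist (f a b) (f c e) ≤ r')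

lemma pairHdist_le_one {V : Type*} (G : SimpleGraph V) {x y : V} (v : V)
    (h : G.dist x y ≤ 1) : pairHdist G.dist x v y v ≤ 1 := by
  simp only [pairHdist, SimpleGraph.dist_self, Nat.min_zero, Nat.le_zero]
  have h1 : min (G.dist x y) (G.dist x v) ≤ 1 := le_trans (min_le_left _ _) h
  have h2 : min (G.dist v y) 0 ≤ 1 := by simp
  have h3 : min (G.dist x y) (G.dist v y) ≤ 1 := le_trans (min_le_left _ _) h
  omega

/-- Claim 1: with `a ≺ b` iff `a ≠ b` and `f {a,b} = a`, and `r` a constant with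
`d_H(A,B) ≤ 1 → d(f A, f B) ≤ r`: if `d(a,b) ≤ p`, `d(v,a) > p + r`, `d(v,b) > p + r`
and `a ≺ v`, then `b ≺ v`. -/
theorem claim1 {V : Type*} (G : SimpleGraph V) (hG : G.Connected)
    (f : V → V → V) (hf : IsTwoSelector G f) (r : ℕ)
    (hr : ∀ a b c e, pairHdist G.dist a b c e ≤ 1 → G.dist (f a b) (f c e) ≤ r) :
    ∀ (v a b : V) (p : ℕ), 0 < p → G.dist a b ≤ p →
      p + r < G.dist v a → p + r < G.dist v b →
      (a ≠ v ∧ f a v = a) → (b ≠ v ∧ f b v = b) := by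
  intro v a b p hp hab hva hvb ⟨hav, hfa⟩
  have hbv : b ≠ v := by
    rintro rfl
    simp [SimpleGraph.dist_self] at hvb
  refine ⟨hbv, ?_⟩
  obtain ⟨w, hw⟩ := (hG a b).exists_walk_length_eq_dist
  -- distance from a to each vertex of the walk
  have hdista : ∀ i, G.dist a (w.getVert i) ≤ i := by
    intro i
    induction i with
    | zero => simp [w.getVert_zero]
    | succ n ih =>
      by_cases hn : n < w.length
      · have hadj := w.adj_getVert_succ hn
        have h1 : G.dist (w.getVert n) (w.getVert (n+1)) = 1 :=
          SimpleGraph.dist_eq_one_iff_adj.mpr hadj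
        have := hG.dist_triangle (u := a) (v := w.getVert n) (w := w.getVert (n+1))
        omega
      · rw [w.getVert_of_length_le (by omega)]
        omega
  -- each vertex of the walk is far from v
  have hfar : ∀ i, r < G.dist v (w.getVert i) := by
    intro i
    by_cases hi : i ≤ w.length
    · have h1 := hdista i
      have h2 := hG.dist_triangle (u := v) (v := w.getVert i) (w := a)
      have h3 : G.dist (w.getVert i) a = G.dist a (w.getVert i) := G.dist_comm
      have : i ≤ p := by omega
      omega
    · rw [w.getVert_of_length_le (by omega)]
      omega
  -- induction along the walk
  have key : ∀ i, f (w.getVert i) v = w.getVert i := by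
    intro i
    induction i with
    | zero => simpa [w.getVert_zero] using hfa
    | succ n ih =>
      by_cases hn : n < w.length
      · have hadj := w.adj_getVert_succ hn
        have h1 : G.dist (w.getVert n) (w.getVert (n+1)) ≤ 1 :=
          le_of_eq (SimpleGraph.dist_eq_one_iff_adj.mpr hadj)
        have hph := pairHdist_le_one G v h1
        have hd := hr _ _ _ _ hph
        rw [ih] at hd
        rcases hf.2.1 (w.getVert (n+1)) v with h | h
        · exact h
        · exfalso
          rw [h] at hd
          have := hfar n
          rw [G.dist_comm] at hd
          omega
      · rw [w.getVert_of_length_le (by omega)] at ih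
        rw [w.getVert_of_length_le (by omega)]
        exact ih
  have := key w.length
  rwa [w.getVert_length] at this
end

section
/- Let Γ be a connected graph with path metric d, f a 2-selector with associated relation a ≺ b iff f({a,b}) = a (a ≠ b), and r such that d_H(A,B) ≤ 1 implies d(f(A),f(B)) ≤ r. Let p > 0, let z₀,…,z_m be a sequence with d(z_i, z_{i+1}) ≤ p for all i, and k an index with d(v, {z₀,…,z_m}) = d(v, z_k). Let v₀,…,v_t be a geodesic path with v₀ = v, v_t = z_k. Assume: (1) d(z₀, z_i) > p + r for all i ∈ {k,…,m}; (2) d(z_m, z_i) > p + r for all i ∈ {0,…,k}; (3) B(z₀, p+r) ∩ {v₀,…,v_t} = ∅; (4) B(z_m, p+r) ∩ {v₀,…,v_t} = ∅. Then d(v, z_k) ≤ p + r. -/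
lemma edge_step {V : Type*} (G : SimpleGraph V)
    (f : V → V → V) (hsel : ∀ a b, f a b = a ∨ f a b = b) (r : ℕ)
    (hr : ∀ a b c e, pairHdist G.dist a b c e ≤ 1 → G.dist (f a b) (f c e) ≤ r)
    (a x x' : V) (hxx : G.dist x x' ≤ 1)
    (hax : r < G.dist a x) (hax' : r < G.dist a x') :
    (f a x = a ↔ f a x' = a) := by
  have hxa : G.dist x a = G.dist a x := G.dist_comm
  have hH : pairHdist G.dist a x a x' ≤ 1 := by
    simp only [pairHdist, SimpleGraph.dist_self]
    omega
  have hd := hr a x a x' hH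
  constructor
  · intro h
    rcases hsel a x' with h' | h'
    · exact h'
    · rw [h, h'] at hd; omega
  · intro h'
    rcases hsel a x with h | h
    · exact h
    · rw [h, h'] at hd
      rw [G.dist_comm] at hd; omega

lemma far_step {V : Type*} (G : SimpleGraph V) (hG : G.Connected)
    (f : V → V → V) (hsel : ∀ a b, f a b = a ∨ f a b = b) (r : ℕ)
    (hr : ∀ a b c e, pairHdist G.dist a b c e ≤ 1 → G.dist (f a b) (f c e) ≤ r) :
    ∀ n (a x x' : V), G.dist x x' = n → r + n < G.dist a x →
      (f a x = a ↔ f a x' = a) := by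
  intro n
  induction n with
  | zero =>
    intro a x x' h0 _
    rw [(hG.dist_eq_zero_iff).mp h0]
  | succ n ih =>
    intro a x x' hn hfar
    obtain ⟨q, hq⟩ := hG.exists_walk_length_eq_dist x x'
    cases q with
    | nil => simp [SimpleGraph.dist_self] at hn
    | @cons _ b _ hadjb q' =>
      rw [SimpleGraph.Walk.length_cons, hn] at hq
      have hq' : q'.length = n := by omega
      have hxb : G.dist x b ≤ 1 := by
        have := SimpleGraph.dist_le (SimpleGraph.Walk.cons hadjb SimpleGraph.Walk.nil)
        simpa using this
      have hbx' : G.dist b x' = n := by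
        have h1 : G.dist b x' ≤ n := hq' ▸ SimpleGraph.dist_le q'
        have h2 : G.dist x x' ≤ G.dist x b + G.dist b x' := hG.dist_triangle
        omega
      have hab : r + n < G.dist a b := by
        have h2 : G.dist a x ≤ G.dist a b + G.dist b x := hG.dist_triangle
        have h3 : G.dist b x = G.dist x b := G.dist_comm
        omega
      exact (edge_step G f hsel r hr a x b hxb (by omega) (by omega)).trans
        (ih a b x' hbx' hab)

/-- Claim 2: for a `p`-chain `z₀,…,z_m`, a point `v` whose distance to the chain is
realized at `z_k`, and a geodesic path `v₀,…,v_t` from `v` to `z_k`, the four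
separation conditions (1)–(4) force `d(v, z_k) ≤ p + r`. -/
theorem claim2 {V : Type*} (G : SimpleGraph V) (hG : G.Connected)
    (f : V → V → V) (hf : IsTwoSelector G f) (r : ℕ)
    (hr : ∀ a b c e, pairHdist G.dist a b c e ≤ 1 → G.dist (f a b) (f c e) ≤ r)
    (p : ℕ) (hp : 0 < p) (m : ℕ) (z : ℕ → V)
    (hchain : ∀ i < m, G.dist (z i) (z (i + 1)) ≤ p)
    (v : V) (k : ℕ) (hk : k ≤ m)
    (hnear : ∀ i ≤ m, G.dist v (z k) ≤ G.dist v (z i))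
    (t : ℕ) (w : ℕ → V) (hw0 : w 0 = v) (hwt : w t = z k)
    (hgeo : G.dist v (z k) = t) (hadj : ∀ i < t, G.Adj (w i) (w (i + 1)))
    (h1 : ∀ i, k ≤ i → i ≤ m → p + r < G.dist (z 0) (z i))
    (h2 : ∀ i ≤ k, p + r < G.dist (z m) (z i))
    (h3 : ∀ i ≤ t, p + r < G.dist (z 0) (w i))
    (h4 : ∀ i ≤ t, p + r < G.dist (z m) (w i)) :
    G.dist v (z k) ≤ p + r := by
  obtain ⟨hsymm, hsel, -⟩ := hf
  by_contra hcon
  push_neg at hcon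
  -- family 1 : along the chain from z m down to z k, the choice in {z 0, z i} is constant
  have fam1 : ∀ j ≤ m - k, (f (z 0) (z (m - j)) = z 0 ↔ f (z 0) (z m) = z 0) := by
    intro j hj
    induction j with
    | zero => simp
    | succ j ih =>
      have e : m - (j + 1) + 1 = m - j := by omega
      have hc : G.dist (z (m - (j+1))) (z (m - j)) ≤ p := by
        have := hchain (m - (j+1)) (by omega)
        rwa [e] at this
      have hfar : r + G.dist (z (m - (j+1))) (z (m - j)) < G.dist (z 0) (z (m - (j+1))) := by
        have := h1 (m - (j+1)) (by omega) (by omega)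
        omega
      exact (far_step G hG f hsel r hr _ (z 0) _ _ rfl hfar).trans (ih (by omega))
  -- family 1' : along the path from w t down to w 0 = v
  have famP : ∀ j ≤ t, (f (z 0) (w (t - j)) = z 0 ↔ f (z 0) (w t) = z 0) := by
    intro j hj
    induction j with
    | zero => simp
    | succ j ih =>
      have e : t - (j + 1) + 1 = t - j := by omega
      have hd1 : G.dist (w (t - (j+1))) (w (t - j)) ≤ 1 := by
        have ha := hadj (t - (j+1)) (by omega)
        rw [e] at ha
        have := SimpleGraph.dist_le (SimpleGraph.Walk.cons ha SimpleGraph.Walk.nil)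
        simpa using this
      have hA := h3 (t - (j+1)) (by omega)
      have hB := h3 (t - j) (by omega)
      exact (edge_step G f hsel r hr (z 0) _ _ hd1 (by omega) (by omega)).trans (ih (by omega))
  -- family 2 : along the chain from z 0 up to z k, the choice in {z m, z i} is constant
  have fam2 : ∀ j ≤ k, (f (z m) (z j) = z m ↔ f (z m) (z 0) = z m) := by
    intro j hj
    induction j with
    | zero => simp
    | succ j ih =>
      have hc : G.dist (z (j+1)) (z j) ≤ p := by
        have := hchain j (by omega)
        rw [G.dist_comm]; exact this
      have hfar : r + G.dist (z (j+1)) (z j) < G.dist (z m) (z (j+1)) := by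
        have := h2 (j+1) hj
        omega
      exact (far_step G hG f hsel r hr _ (z m) _ _ rfl hfar).trans (ih (by omega))
  -- family 2' : along the path, choice in {z m, w i} is constant
  have famP2 : ∀ j ≤ t, (f (z m) (w (t - j)) = z m ↔ f (z m) (w t) = z m) := by
    intro j hj
    induction j with
    | zero => simp
    | succ j ih =>
      have e : t - (j + 1) + 1 = t - j := by omega
      have hd1 : G.dist (w (t - (j+1))) (w (t - j)) ≤ 1 := by
        have ha := hadj (t - (j+1)) (by omega)
        rw [e] at ha
        have := SimpleGraph.dist_le (SimpleGraph.Walk.cons ha SimpleGraph.Walk.nil)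
        simpa using this
      have hA := h4 (t - (j+1)) (by omega)
      have hB := h4 (t - j) (by omega)
      exact (edge_step G f hsel r hr (z m) _ _ hd1 (by omega) (by omega)).trans (ih (by omega))
  -- family 3 : chain from z 0 to z m, choice in {v, z i} is constant
  have fam3 : ∀ j ≤ m, (f v (z j) = v ↔ f v (z 0) = v) := by
    intro j hj
    induction j with
    | zero => simp
    | succ j ih =>
      have hc : G.dist (z (j+1)) (z j) ≤ p := by
        have := hchain j (by omega)
        rw [G.dist_comm]; exact this
      have hfar : r + G.dist (z (j+1)) (z j) < G.dist v (z (j+1)) := by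
        have := hnear (j+1) hj
        omega
      exact (far_step G hG f hsel r hr _ v _ _ rfl hfar).trans (ih (by omega))
  -- combined equivalences
  have chainA : (f (z 0) v = z 0 ↔ f (z 0) (z m) = z 0) := by
    have e1 := famP t le_rfl
    simp only [Nat.sub_self, hw0, hwt] at e1
    have e2 := fam1 (m - k) (le_rfl)
    have e3 : m - (m - k) = k := by omega
    rw [e3] at e2
    exact e1.trans e2
  have chainB : (f (z m) v = z m ↔ f (z m) (z 0) = z m) := by
    have e1 := famP2 t le_rfl
    simp only [Nat.sub_self, hw0, hwt] at e1
    exact e1.trans (fam2 k le_rfl)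
  have chainC : (f v (z m) = v ↔ f v (z 0) = v) := fam3 m le_rfl
  -- basic distance facts
  have hz0v : 0 < G.dist (z 0) v := by have := h3 0 (Nat.zero_le _); rw [hw0] at this; omega
  have hzmv : 0 < G.dist (z m) v := by have := h4 0 (Nat.zero_le _); rw [hw0] at this; omega
  have hz0m : 0 < G.dist (z 0) (z m) := by have := h1 m hk le_rfl; omega
  have nz0v : z 0 ≠ v := fun h => by rw [h, SimpleGraph.dist_self] at hz0v; omega
  have nzmv : z m ≠ v := fun h => by rw [h, SimpleGraph.dist_self] at hzmv; omega
  have nz0m : z 0 ≠ z m := fun h => by rw [h, SimpleGraph.dist_self] at hz0m; omega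
  rcases hsel (z 0) (z m) with h0 | h0
  · have A : f (z 0) v = z 0 := chainA.mpr h0
    have B : f v (z 0) ≠ v := by rw [hsymm v (z 0), A]; exact nz0v
    have C : f v (z m) ≠ v := fun h => B (chainC.mp h)
    have D : f v (z m) = z m := (hsel v (z m)).resolve_left C
    have E : f (z m) v = z m := by rw [hsymm (z m) v]; exact D
    have F : f (z m) (z 0) = z m := chainB.mp E
    rw [hsymm (z m) (z 0), h0] at F
    exact nz0m F
  · have A : f (z 0) v ≠ z 0 := fun h => nz0m ((chainA.mp h).symm.trans h0)
    have A' : f (z 0) v = v := (hsel (z 0) v).resolve_left A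
    have B : f v (z 0) = v := by rw [hsymm v (z 0)]; exact A'
    have C : f v (z m) = v := chainC.mpr B
    have D : f (z m) v ≠ z m := by rw [hsymm (z m) v, C]; exact fun h => nzmv h.symm
    have E : f (z m) (z 0) ≠ z m := fun h => D (chainB.mpr h)
    have F : f (z m) (z 0) = z 0 := (hsel (z m) (z 0)).resolve_left E
    rw [hsymm (z m) (z 0), h0] at F
    exact nz0m F.symm
end

section
/- If a metric space X admits a 2-selector and Y is a metric space quasi-isometric (coarsely equivalent) to X, then Y admits a 2-selector. -/
/-- A 2-selector of a metric space: a symmetric choice `f {a,b} ∈ {a,b}` which is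
macro-uniform with respect to the Hausdorff metric on two-element subsets. -/
def IsTwoSelectorM {X : Type*} [MetricSpace X] (f : X → X → X) : Prop :=
  (∀ a b, f a b = f b a) ∧ (∀ a b, f a b = a ∨ f a b = b) ∧
  (∀ r : ℝ, 0 < r → ∃ r' : ℝ, 0 < r' ∧ ∀ a b c e : X,
      Metric.hausdorffDist ({a, b} : Set X) ({c, e} : Set X) ≤ r →
      dist (f a b) (f c e) ≤ r')

/-- A quasi-isometry (coarse equivalence) between metric spaces. -/
def IsQuasiIsometry {X Y : Type*} [MetricSpace X] [MetricSpace Y] (φ : X → Y) : Prop :=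
  ∃ L C : ℝ, 1 ≤ L ∧ 0 ≤ C ∧
    (∀ x x', dist (φ x) (φ x') ≤ L * dist x x' + C ∧
             dist x x' ≤ L * dist (φ x) (φ x') + C) ∧
    (∀ y, ∃ x, dist y (φ x) ≤ C)

/-- From a Hausdorff distance bound on pairs, every point of one pair is close to the
other pair. -/
lemma pair_close {Y : Type*} [MetricSpace Y] (u a b c e : Y) {r : ℝ}
    (hu : u ∈ ({a, b} : Set Y))
    (h : Metric.hausdorffDist ({a, b} : Set Y) ({c, e} : Set Y) ≤ r) :
    dist u c ≤ r ∨ dist u e ≤ r := by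
  have hfin : EMetric.hausdorffEdist ({a, b} : Set Y) ({c, e} : Set Y) ≠ ⊤ :=
    Metric.hausdorffEdist_ne_top_of_nonempty_of_bounded ⟨a, by simp⟩ ⟨c, by simp⟩
      (Set.toFinite _).isBounded (Set.toFinite _).isBounded
  have h1 : Metric.infDist u ({c, e} : Set Y) ≤ r :=
    (Metric.infDist_le_hausdorffDist_of_mem hu hfin).trans h
  have hcpt : IsCompact ({c, e} : Set Y) := (Set.toFinite _).isCompact
  obtain ⟨y, hy, hyd⟩ := hcpt.exists_infDist_eq_dist ⟨c, by simp⟩ u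
  rcases hy with rfl | hy
  · exact Or.inl (hyd ▸ h1)
  · rcases hy with rfl
    exact Or.inr (hyd ▸ h1)

/-- If `X` admits a 2-selector and `Y` is quasi-isometric to `X`, then `Y` admits
a 2-selector. -/
theorem two_selector_of_quasiIsometry {X Y : Type*} [MetricSpace X] [MetricSpace Y]
    (φ : Y → X) (hφ : IsQuasiIsometry φ)
    (f : X → X → X) (hf : IsTwoSelectorM f) :
    ∃ g : Y → Y → Y, IsTwoSelectorM g := by
  obtain ⟨L, C, hL, hC, hQI, -⟩ := hφ
  obtain ⟨hsym, hsel, hunif⟩ := hf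
  classical
  set g : Y → Y → Y := fun a b =>
    if φ a = φ b then (if WellOrderingRel a b then a else b)
    else (if f (φ a) (φ b) = φ a then a else b) with hg
  -- key: φ (g a b) = f (φ a) (φ b)
  have hkey : ∀ a b, φ (g a b) = f (φ a) (φ b) := by
    intro a b
    simp only [hg]
    by_cases h : φ a = φ b
    · have hfa : f (φ a) (φ b) = φ a := by
        rcases hsel (φ a) (φ b) with h' | h'
        · exact h'
        · exact h'.trans h.symm
      rw [if_pos h, hfa]
      by_cases hw : WellOrderingRel a b
      · rw [if_pos hw]
      · rw [if_neg hw]; exact h.symm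
    · rw [if_neg h]
      rcases hsel (φ a) (φ b) with h' | h'
      · rw [if_pos h', h']
      · have hne : f (φ a) (φ b) ≠ φ a := by rw [h']; exact fun h'' => h h''.symm
        rw [if_neg hne, h']
  refine ⟨g, ?_, ?_, ?_⟩
  · intro a b
    rcases eq_or_ne a b with rfl | hab
    · rfl
    simp only [hg]
    by_cases h : φ a = φ b
    · rw [if_pos h, if_pos h.symm]
      rcases trichotomous (r := WellOrderingRel) a b with hw | rfl | hw
      · rw [if_pos hw, if_neg (asymm hw)]
      · rfl
      · rw [if_neg (asymm hw), if_pos hw]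
    · have h' : ¬ φ b = φ a := fun h'' => h h''.symm
      rw [if_neg h, if_neg h']
      rcases hsel (φ a) (φ b) with hs | hs
      · have hs' : f (φ b) (φ a) ≠ φ b := by
          rw [hsym, hs]; exact fun h'' => h h''
        rw [if_pos hs, if_neg hs']
      · have hs' : f (φ b) (φ a) = φ b := (hsym _ _).trans hs
        have hne : f (φ a) (φ b) ≠ φ a := by rw [hs]; exact fun h'' => h h''.symm
        rw [if_neg hne, if_pos hs']
  · intro a b
    simp only [hg]
    split_ifs <;> simp
  · intro r hr
    have hrR : 0 < L * r + C := by nlinarith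
    obtain ⟨r'', hr'', hr''u⟩ := hunif (L * r + C) hrR
    refine ⟨L * r'' + C, by nlinarith, ?_⟩
    intro a b c e h
    have hsymH : Metric.hausdorffDist ({c, e} : Set Y) ({a, b} : Set Y) ≤ r := by
      rwa [Metric.hausdorffDist_comm]
    have hHX : Metric.hausdorffDist ({φ a, φ b} : Set X) ({φ c, φ e} : Set X) ≤ L * r + C := by
      apply Metric.hausdorffDist_le_of_mem_dist hrR.le
      · rintro x (rfl | rfl)
        · rcases pair_close a a b c e (by simp) h with hd | hd
          · exact ⟨φ c, by simp, le_trans ((hQI a c).1) (by nlinarith)⟩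
          · exact ⟨φ e, by simp, le_trans ((hQI a e).1) (by nlinarith)⟩
        · rcases pair_close b a b c e (by simp) h with hd | hd
          · exact ⟨φ c, by simp, le_trans ((hQI b c).1) (by nlinarith)⟩
          · exact ⟨φ e, by simp, le_trans ((hQI b e).1) (by nlinarith)⟩
      · rintro x (rfl | rfl)
        · rcases pair_close c c e a b (by simp) hsymH with hd | hd
          · exact ⟨φ a, by simp, le_trans ((hQI c a).1) (by nlinarith)⟩
          · exact ⟨φ b, by simp, le_trans ((hQI c b).1) (by nlinarith)⟩
        · rcases pair_close e c e a b (by simp) hsymH with hd | hd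
          · exact ⟨φ a, by simp, le_trans ((hQI e a).1) (by nlinarith)⟩
          · exact ⟨φ b, by simp, le_trans ((hQI e b).1) (by nlinarith)⟩
    have hX : dist (f (φ a) (φ b)) (f (φ c) (φ e)) ≤ r'' := hr''u _ _ _ _ hHX
    calc dist (g a b) (g c e) ≤ L * dist (φ (g a b)) (φ (g c e)) + C := (hQI _ _).2
      _ = L * dist (f (φ a) (φ b)) (f (φ c) (φ e)) + C := by rw [hkey, hkey]
      _ ≤ L * r'' + C := by nlinarith [dist_nonneg (x := f (φ a) (φ b)) (y := f (φ c) (φ e))]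
end

section
/- If an unbounded geodesic metric space X admits a linear order compatible with its coarse structure, then X is coarsely equivalent to ℕ or to ℤ (with their standard metrics). -/
def IsGeodesicSpace (X : Type*) [MetricSpace X] : Prop :=
  ∀ x y : X, ∃ f : ℝ → X, f 0 = x ∧ f (dist x y) = y ∧
    ∀ s ∈ Set.Icc (0 : ℝ) (dist x y), ∀ t ∈ Set.Icc (0 : ℝ) (dist x y),
      dist (f s) (f t) = |s - t|

def QIWith {α β : Type*} (dX : α → α → ℝ) (dY : β → β → ℝ) (φ : α → β) : Prop :=
  ∃ L C : ℝ, 1 ≤ L ∧ 0 ≤ C ∧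
    (∀ x x', dY (φ x) (φ x') ≤ L * dX x x' + C ∧ dX x x' ≤ L * dY (φ x) (φ x') + C) ∧
    (∀ y, ∃ x, dY y (φ x) ≤ C)

/-- A linear order on a metric space is compatible with the (bounded) coarse structure:
for every radius `r` there is a radius `R ≥ r` such that if `x < y` (resp. `y < x`) and
`dist x y > R`, then every `x'` with `dist x x' ≤ r` satisfies `x' < y` (resp. `y < x'`). -/
def CompatibleOrder (X : Type*) [MetricSpace X] [LinearOrder X] : Prop :=
  ∀ r : ℝ, 0 < r → ∃ R : ℝ, r ≤ R ∧
    ∀ x y : X, R < dist x y →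
      ((x < y → ∀ x', dist x x' ≤ r → x' < y) ∧
       (y < x → ∀ x', dist x x' ≤ r → y < x'))

lemma geod_between {X : Type*} [MetricSpace X] [LinearOrder X]
    (hX : IsGeodesicSpace X) {R : ℝ} (hR1 : 1 ≤ R)
    (hR : ∀ x y : X, R < dist x y → x < y → ∀ x', dist x x' ≤ 1 → x' < y)
    {x y z : X} (hxy : x < y) (hyz : y < z) :
    dist x y + dist y z ≤ dist x z + 2 * R := by
  rcases le_or_gt (dist x y) R with hd | hd
  · have h := dist_triangle y x z
    rw [dist_comm y x] at h
    linarith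
  · have hxz : x ≠ z := (hxy.trans hyz).ne
    have hD : 0 < dist x z := dist_pos.mpr hxz
    obtain ⟨f, hf0, hfD, hiso⟩ := hX x z
    set D := dist x z with hDdef
    set n := ⌈D⌉₊ with hn
    have hn0 : 0 < n := Nat.ceil_pos.mpr hD
    have hDn : D ≤ n := Nat.le_ceil D
    have hn0' : (0:ℝ) < n := by exact_mod_cast hn0
    have hstep : D / n ≤ 1 := by rw [div_le_one hn0']; exact hDn
    have hnD : (n:ℝ) * (D / n) = D := by field_simp
    have hmem : ∀ i : ℕ, i ≤ n → (i : ℝ) * (D / n) ∈ Set.Icc (0:ℝ) D := by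
      intro i hi
      constructor
      · positivity
      · have h1 : (i:ℝ) * (D/n) ≤ (n:ℝ) * (D/n) := by
          apply mul_le_mul_of_nonneg_right _ (by positivity)
          exact_mod_cast hi
        rwa [hnD] at h1
    have cross : ∃ i : ℕ, i ≤ n ∧ dist (f ((i:ℝ) * (D/n))) y ≤ R := by
      by_contra hc
      push_neg at hc
      have mono : ∀ i : ℕ, i ≤ n → f ((i:ℝ) * (D/n)) < y := by
        intro i
        induction i with
        | zero => intro _; simpa [hf0] using hxy
        | succ i ih =>
          intro hi
          have hi' : i ≤ n := Nat.le_of_succ_le hi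
          have h1 := ih hi'
          have h2 := hc i hi'
          apply hR _ _ h2 h1
          have heq := hiso _ (hmem i hi') _ (hmem (i+1) hi)
          rw [heq]
          have : |(i:ℝ) * (D/n) - ((i+1 : ℕ):ℝ) * (D/n)| = D/n := by
            push_cast
            rw [show (i:ℝ) * (D/n) - ((i:ℝ)+1) * (D/n) = -(D/n) by ring, abs_neg,
              abs_of_nonneg (by positivity)]
          rw [this]; exact hstep
      have hfin := mono n le_rfl
      rw [hnD, hfD] at hfin
      exact absurd hfin (lt_asymm hyz)
    obtain ⟨i, hi, hclose⟩ := cross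
    set ti := (i:ℝ) * (D/n) with hti
    have htimem := hmem i hi
    have hx_fi : dist x (f ti) = ti := by
      have h := hiso 0 ⟨le_rfl, hD.le⟩ ti htimem
      rw [hf0] at h
      rw [h, abs_of_nonpos (by linarith [htimem.1]), neg_sub, sub_zero]
    have hfi_z : dist (f ti) z = D - ti := by
      have h := hiso ti htimem D ⟨hD.le, le_rfl⟩
      rw [hfD] at h
      rw [h, abs_of_nonpos (by linarith [htimem.2]), neg_sub]
    have t1 : dist x y ≤ ti + R := by
      have := dist_triangle x (f ti) y
      linarith [this, hx_fi.le, hclose]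
    have t2 : dist y z ≤ R + (D - ti) := by
      have h := dist_triangle y (f ti) z
      rw [dist_comm y (f ti)] at h
      linarith
    linarith

noncomputable def sdist {X : Type*} [MetricSpace X] [LinearOrder X] (e x : X) : ℝ :=
  if e ≤ x then dist e x else -dist e x

lemma sdist_self {X : Type*} [MetricSpace X] [LinearOrder X] (e : X) : sdist e e = 0 := by
  simp [sdist]

lemma sdist_of_le {X : Type*} [MetricSpace X] [LinearOrder X] {e x : X} (h : e ≤ x) :
    sdist e x = dist e x := if_pos h

lemma sdist_of_lt {X : Type*} [MetricSpace X] [LinearOrder X] {e x : X} (h : x < e) :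
    sdist e x = -dist e x := if_neg (not_le.mpr h)

lemma abs_sdist {X : Type*} [MetricSpace X] [LinearOrder X] (e x : X) :
    |sdist e x| = dist e x := by
  unfold sdist; split <;> simp [abs_of_nonneg dist_nonneg]

lemma abs_dist_sub_le' {X : Type*} [MetricSpace X] (e x y : X) :
    |dist e x - dist e y| ≤ dist x y := by
  have h := abs_dist_sub_le x y e
  rwa [dist_comm x e, dist_comm y e] at h

lemma sdist_key {X : Type*} [MetricSpace X] [LinearOrder X] {K : ℝ} (hK : 0 ≤ K)
    (hbtw : ∀ x y z : X, x < y → y < z → dist x y + dist y z ≤ dist x z + K) (e : X) :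
    ∀ x y : X, |sdist e x - sdist e y| ≤ dist x y + K ∧ dist x y ≤ |sdist e x - sdist e y| + K := by
  have main : ∀ x y : X, x ≤ y →
      |sdist e x - sdist e y| ≤ dist x y + K ∧ dist x y ≤ |sdist e x - sdist e y| + K := by
    intro x y hxy
    rcases eq_or_lt_of_le hxy with rfl | hlt
    · simp [hK]
    rcases le_or_gt e x with hex | hex
    · -- e ≤ x < y
      have hey : e ≤ y := hex.trans hxy
      rw [sdist_of_le hex, sdist_of_le hey]
      refine ⟨le_add_of_le_of_nonneg (abs_dist_sub_le' e x y) hK, ?_⟩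
      rcases eq_or_lt_of_le hex with rfl | hex'
      · rw [dist_self, zero_sub, abs_neg, abs_of_nonneg dist_nonneg]
        linarith
      · have h := hbtw e x y hex' hlt
        have h2 : dist e y - dist e x ≤ |dist e x - dist e y| := by
          rw [abs_sub_comm]; exact le_abs_self _
        linarith
    · rcases le_or_gt e y with hey | hey
      · -- x < e ≤ y
        rw [sdist_of_lt hex, sdist_of_le hey]
        have habs : |(-dist e x) - dist e y| = dist e x + dist e y := by
          rw [show (-dist e x) - dist e y = -(dist e x + dist e y) by ring, abs_neg,
            abs_of_nonneg (by positivity)]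
        rw [habs]
        constructor
        · rcases eq_or_lt_of_le hey with rfl | hey'
          · rw [dist_self, add_zero, dist_comm]; linarith
          · have h := hbtw x e y hex hey'
            rw [dist_comm x e] at h
            linarith
        · have h := dist_triangle x e y
          rw [dist_comm x e] at h
          linarith
      · -- x < y < e
        rw [sdist_of_lt hex, sdist_of_lt hey]
        have habs : |(-dist e x) - (-dist e y)| = |dist e x - dist e y| := by
          rw [show (-dist e x) - (-dist e y) = -(dist e x - dist e y) by ring, abs_neg]
        rw [habs]
        refine ⟨le_add_of_le_of_nonneg (abs_dist_sub_le' e x y) hK, ?_⟩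
        have h := hbtw x y e hlt hey
        have h2 : dist e x - dist e y ≤ |dist e x - dist e y| := le_abs_self _
        rw [dist_comm y e] at h
        have h3 : dist x y + dist e y ≤ dist x e + K := h
        rw [dist_comm x e] at h3
        linarith
  intro x y
  rcases le_total x y with h | h
  · exact main x y h
  · obtain ⟨h1, h2⟩ := main y x h
    rw [abs_sub_comm, dist_comm] at h1 h2
    exact ⟨h1, h2⟩

lemma floor_diff_le (a b : ℝ) : |((⌊a⌋:ℝ)) - ((⌊b⌋:ℝ))| ≤ |a-b| + 1 := by
  have h1 := Int.floor_le a; have h2 := Int.lt_floor_add_one a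
  have h3 := Int.floor_le b; have h4 := Int.lt_floor_add_one b
  rcases abs_cases (a-b) with ⟨h,h'⟩|⟨h,h'⟩ <;>
    rcases abs_cases ((⌊a⌋:ℝ)-(⌊b⌋:ℝ)) with ⟨g,g'⟩|⟨g,g'⟩ <;> linarith

lemma diff_le_floor (a b : ℝ) : |a-b| ≤ |((⌊a⌋:ℝ)) - ((⌊b⌋:ℝ))| + 1 := by
  have h1 := Int.floor_le a; have h2 := Int.lt_floor_add_one a
  have h3 := Int.floor_le b; have h4 := Int.lt_floor_add_one b
  rcases abs_cases (a-b) with ⟨h,h'⟩|⟨h,h'⟩ <;>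
    rcases abs_cases ((⌊a⌋:ℝ)-(⌊b⌋:ℝ)) with ⟨g,g'⟩|⟨g,g'⟩ <;> linarith

lemma natfloor_diff_le {a b : ℝ} (ha : 0 ≤ a) (hb : 0 ≤ b) :
    |((⌊a⌋₊:ℝ)) - ((⌊b⌋₊:ℝ))| ≤ |a-b| + 1 := by
  have h1 := Nat.floor_le ha; have h2 := Nat.lt_floor_add_one a
  have h3 := Nat.floor_le hb; have h4 := Nat.lt_floor_add_one b
  rcases abs_cases (a-b) with ⟨h,h'⟩|⟨h,h'⟩ <;>
    rcases abs_cases ((⌊a⌋₊:ℝ)-(⌊b⌋₊:ℝ)) with ⟨g,g'⟩|⟨g,g'⟩ <;> linarith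

lemma natdiff_le_floor {a b : ℝ} (ha : 0 ≤ a) (hb : 0 ≤ b) :
    |a-b| ≤ |((⌊a⌋₊:ℝ)) - ((⌊b⌋₊:ℝ))| + 1 := by
  have h1 := Nat.floor_le ha; have h2 := Nat.lt_floor_add_one a
  have h3 := Nat.floor_le hb; have h4 := Nat.lt_floor_add_one b
  rcases abs_cases (a-b) with ⟨h,h'⟩|⟨h,h'⟩ <;>
    rcases abs_cases ((⌊a⌋₊:ℝ)-(⌊b⌋₊:ℝ)) with ⟨g,g'⟩|⟨g,g'⟩ <;> linarith

lemma dist_onto {X : Type*} [MetricSpace X] (hX : IsGeodesicSpace X)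
    (hunb : ∀ D : ℝ, ∃ x y : X, D < dist x y) (e : X) (t : ℝ) (ht : 0 ≤ t) :
    ∃ x : X, dist e x = t := by
  obtain ⟨a, b, hab⟩ := hunb (2*t)
  have hc' : ∃ c : X, t ≤ dist e c := by
    by_contra h; push_neg at h
    have h1 := dist_triangle a e b
    rw [dist_comm a e] at h1
    linarith [h a, h b]
  obtain ⟨c, hc2⟩ := hc'
  obtain ⟨f, hf0, _, hiso⟩ := hX e c
  refine ⟨f t, ?_⟩
  have h := hiso 0 ⟨le_rfl, dist_nonneg⟩ t ⟨ht, hc2⟩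
  rw [hf0] at h
  rw [h, zero_sub, abs_neg, abs_of_nonneg ht]

lemma reach_pos {X : Type*} [MetricSpace X] [LinearOrder X] (hX : IsGeodesicSpace X)
    {K : ℝ} (hK : 0 ≤ K)
    (hbtw : ∀ x y z : X, x < y → y < z → dist x y + dist y z ≤ dist x z + K) (e : X)
    (hub : ∀ T : ℝ, ∃ x : X, T < sdist e x) {t : ℝ} (ht : K/2 + 1 ≤ t) :
    ∃ z : X, sdist e z = t := by
  have ht0 : 0 < t := by linarith
  obtain ⟨x, hx⟩ := hub t
  have hx0 : 0 < sdist e x := ht0.trans hx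
  have hex : e < x := by
    rcases lt_trichotomy e x with h | h | h
    · exact h
    · rw [← h, sdist_self] at hx0; linarith
    · rw [sdist_of_lt h] at hx0; linarith [dist_nonneg (x := e) (y := x)]
  have hd : dist e x = sdist e x := (sdist_of_le hex.le).symm
  obtain ⟨f, hf0, hfD, hiso⟩ := hX e x
  have htmem : t ∈ Set.Icc (0:ℝ) (dist e x) := ⟨ht0.le, by rw [hd]; exact hx.le⟩
  have hez : dist e (f t) = t := by
    have h := hiso 0 ⟨le_rfl, dist_nonneg⟩ t htmem
    rw [hf0] at h
    rw [h, zero_sub, abs_neg, abs_of_nonneg ht0.le]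
  have hzx : dist (f t) x = dist e x - t := by
    have h := hiso t htmem (dist e x) ⟨dist_nonneg, le_rfl⟩
    rw [hfD] at h
    rw [h, abs_of_nonpos (by linarith [htmem.2]), neg_sub]
  have hez' : e < f t := by
    rcases lt_trichotomy e (f t) with h | h | h
    · exact h
    · rw [← h, dist_self] at hez; linarith
    · exfalso
      have hb := hbtw (f t) e x h hex
      rw [dist_comm (f t) e, hez, hzx] at hb
      linarith
  exact ⟨f t, by rw [sdist_of_le hez'.le, hez]⟩

lemma reach_neg {X : Type*} [MetricSpace X] [LinearOrder X] (hX : IsGeodesicSpace X)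
    {K : ℝ} (hK : 0 ≤ K)
    (hbtw : ∀ x y z : X, x < y → y < z → dist x y + dist y z ≤ dist x z + K) (e : X)
    (hlb : ∀ T : ℝ, ∃ x : X, sdist e x < T) {t : ℝ} (ht : t ≤ -(K/2 + 1)) :
    ∃ z : X, sdist e z = t := by
  have ht0 : t < 0 := by linarith
  obtain ⟨x, hx⟩ := hlb t
  have hx0 : sdist e x < 0 := hx.trans ht0
  have hex : x < e := by
    rcases lt_trichotomy e x with h | h | h
    · rw [sdist_of_le h.le] at hx0; linarith [dist_nonneg (x := e) (y := x)]
    · rw [← h, sdist_self] at hx0; linarith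
    · exact h
  have hd : dist e x = -sdist e x := by rw [sdist_of_lt hex]; ring
  obtain ⟨f, hf0, hfD, hiso⟩ := hX e x
  have htmem : (-t) ∈ Set.Icc (0:ℝ) (dist e x) := ⟨by linarith, by rw [hd]; linarith⟩
  have hez : dist e (f (-t)) = -t := by
    have h := hiso 0 ⟨le_rfl, dist_nonneg⟩ (-t) htmem
    rw [hf0] at h
    rw [h, zero_sub, abs_neg, abs_of_nonneg (by linarith : (0:ℝ) ≤ -t)]
  have hzx : dist (f (-t)) x = dist e x + t := by
    have h := hiso (-t) htmem (dist e x) ⟨dist_nonneg, le_rfl⟩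
    rw [hfD] at h
    rw [h, abs_of_nonpos (by linarith [htmem.2])]
    ring
  have hez' : f (-t) < e := by
    rcases lt_trichotomy (f (-t)) e with h | h | h
    · exact h
    · rw [h, dist_self] at hez; linarith
    · exfalso
      have hb := hbtw x e (f (-t)) hex h
      rw [dist_comm x e, hez, dist_comm x (f (-t)), hzx] at hb
      linarith
  refine ⟨f (-t), by rw [sdist_of_lt hez', hez]; ring⟩

/-- If an unbounded geodesic metric space admits a linear order compatible with its
coarse structure, then it is coarsely equivalent to `ℕ` or to `ℤ`. -/
theorem unbounded_geodesic_with_compatible_order {X : Type*} [MetricSpace X]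
    [LinearOrder X] (hX : IsGeodesicSpace X)
    (hunb : ∀ D : ℝ, ∃ x y : X, D < dist x y)
    (hcomp : CompatibleOrder X) :
    (∃ φ : X → ℕ, QIWith (fun x y : X => dist x y) (fun m n : ℕ => dist m n) φ) ∨
    (∃ φ : X → ℤ, QIWith (fun x y : X => dist x y) (fun m n : ℤ => dist m n) φ) := by
  obtain ⟨R, hR1, hRp⟩ := hcomp 1 one_pos
  have hR0 : (0:ℝ) ≤ R := by linarith
  obtain ⟨e, _, _⟩ := hunb 0
  set K := 2 * R with hKdef
  have hK : 0 ≤ K := by positivity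
  have hbtw : ∀ x y z : X, x < y → y < z → dist x y + dist y z ≤ dist x z + K :=
    fun x y z h1 h2 => geod_between hX hR1 (fun a b hab => (hRp a b hab).1) h1 h2
  have hkey := sdist_key hK hbtw e
  have hrange : ∀ t : ℝ, 0 ≤ t → ∃ x : X, dist e x = t := dist_onto hX hunb e
  by_cases hB : ∃ M : ℝ, (∀ x, sdist e x ≤ M) ∨ (∀ x, -M ≤ sdist e x)
  · left
    obtain ⟨M, hM⟩ := hB
    have hM0 : 0 ≤ M := by
      rcases hM with h | h
      · have := h e; rw [sdist_self] at this; linarith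
      · have := h e; rw [sdist_self] at this; linarith
    have habs : ∀ x y : X, |sdist e x - sdist e y| ≤ |dist e x - dist e y| + 2*M := by
      intro x y
      rw [← abs_sdist e x, ← abs_sdist e y]
      rcases hM with h | h <;>
      · have hx := h x; have hy := h y
        rcases abs_cases (sdist e x) with ⟨p1,p2⟩|⟨p1,p2⟩ <;>
        rcases abs_cases (sdist e y) with ⟨q1,q2⟩|⟨q1,q2⟩ <;>
        rcases abs_cases (sdist e x - sdist e y) with ⟨r1,r2⟩|⟨r1,r2⟩ <;>
        rcases abs_cases (|sdist e x| - |sdist e y|) with ⟨s1,s2⟩|⟨s1,s2⟩ <;>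
        linarith
    refine ⟨fun x => ⌊dist e x⌋₊, 1, K + 2*M + 2, le_refl 1, by linarith, ?_, ?_⟩
    · intro x y
      have h1 := (hkey x y).1
      have h2 := (hkey x y).2
      have hab := habs x y
      have hd := abs_dist_sub_le' e x y
      have hup := natfloor_diff_le (dist_nonneg (x := e) (y := x)) (dist_nonneg (x := e) (y := y))
      have hdn := natdiff_le_floor (dist_nonneg (x := e) (y := x)) (dist_nonneg (x := e) (y := y))
      simp only [Nat.dist_eq, one_mul]
      constructor <;> linarith
    · intro n
      obtain ⟨x, hx⟩ := hrange n (Nat.cast_nonneg n)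
      have hfx : ⌊dist e x⌋₊ = n := by rw [hx]; exact Nat.floor_natCast n
      refine ⟨x, ?_⟩
      show dist n (⌊dist e x⌋₊) ≤ K + 2*M + 2
      rw [hfx, dist_self]
      linarith
  · right
    push_neg at hB
    have hub : ∀ T : ℝ, ∃ x : X, T < sdist e x := fun T => (hB T).1
    have hlb : ∀ T : ℝ, ∃ x : X, sdist e x < T := fun T => by
      obtain ⟨x, h⟩ := (hB (-T)).2
      exact ⟨x, by rwa [neg_neg] at h⟩
    refine ⟨fun x => ⌊sdist e x⌋, 1, 2*K + 2, le_refl 1, by linarith, ?_, ?_⟩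
    · intro x y
      have h1 := (hkey x y).1
      have h2 := (hkey x y).2
      have hf := floor_diff_le (sdist e x) (sdist e y)
      have hf2 := diff_le_floor (sdist e x) (sdist e y)
      simp only [Int.dist_eq, one_mul]
      push_cast
      constructor <;> linarith
    · intro n
      rcases le_or_gt (|(n:ℝ)|) (K/2+1) with hn | hn
      · refine ⟨e, ?_⟩
        have h0 : ⌊sdist e e⌋ = 0 := by rw [sdist_self]; exact Int.floor_zero
        show dist n (⌊sdist e e⌋) ≤ 2*K + 2
        rw [Int.dist_eq, h0]
        push_cast
        rw [sub_zero]
        linarith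
      · rcases le_or_gt 0 (n:ℝ) with hpos | hneg
        · have hn' : K/2 + 1 ≤ (n:ℝ) := by rw [abs_of_nonneg hpos] at hn; linarith
          obtain ⟨z, hz⟩ := reach_pos hX hK hbtw e hub hn'
          refine ⟨z, ?_⟩
          have : ⌊sdist e z⌋ = n := by rw [hz]; exact Int.floor_intCast n
          show dist n (⌊sdist e z⌋) ≤ 2*K + 2
          rw [Int.dist_eq, this, sub_self, abs_zero]
          linarith
        · have hn' : (n:ℝ) ≤ -(K/2 + 1) := by rw [abs_of_neg hneg] at hn; linarith
          obtain ⟨z, hz⟩ := reach_neg hX hK hbtw e hlb hn'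
          refine ⟨z, ?_⟩
          have : ⌊sdist e z⌋ = n := by rw [hz]; exact Int.floor_intCast n
          show dist n (⌊sdist e z⌋) ≤ 2*K + 2
          rw [Int.dist_eq, this, sub_self, abs_zero]
          linarith
end

section
/- A connected graph Γ admits a 2-selector if and only if Γ is either bounded or coarsely equivalent (quasi-isometric) to ℕ or to ℤ. -/
open SimpleGraph


section Helpers

variable {V : Type*} {G : SimpleGraph V}

private lemma TS.dist_getVert_le (hG : G.Connected) {u v : V} (w : G.Walk u v) (k : ℕ) :
    G.dist u (w.getVert k) ≤ k := by
  induction k with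
  | zero => simp [w.getVert_zero]
  | succ k ih =>
    by_cases hk : k < w.length
    · have hadj := w.adj_getVert_succ hk
      have h1 : G.dist (w.getVert k) (w.getVert (k+1)) = 1 := dist_eq_one_iff_adj.mpr hadj
      calc G.dist u (w.getVert (k+1)) ≤ G.dist u (w.getVert k) + G.dist (w.getVert k) (w.getVert (k+1)) :=
            hG.dist_triangle
        _ ≤ k + 1 := by omega
    · have h1 : w.getVert (k+1) = v := w.getVert_of_length_le (by omega)
      have h2 : w.getVert k = v := w.getVert_of_length_le (by omega)
      rw [h1, ← h2]; omega

private lemma TS.getVert_dist_le (hG : G.Connected) {u v : V} (w : G.Walk u v) {k : ℕ}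
    (hk : k ≤ w.length) : G.dist (w.getVert k) v ≤ w.length - k := by
  have h1 : w.getVert k = w.reverse.getVert (w.length - k) := by
    rw [w.getVert_reverse]
    congr 1
    omega
  rw [h1, SimpleGraph.dist_comm]
  have := TS.dist_getVert_le hG w.reverse (w.length - k)
  simpa using this

/-- On a geodesic walk, every support vertex lies metrically between the endpoints. -/
private lemma TS.geodesic_support (hG : G.Connected) {x y : V} (w : G.Walk x y)
    (hw : w.length = G.dist x y) {z : V} (hz : z ∈ w.support) :
    G.dist x z + G.dist z y = G.dist x y := by
  obtain ⟨k, hk, hkle⟩ := (SimpleGraph.Walk.mem_support_iff_exists_getVert).mp hz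
  subst hk
  have h1 := TS.dist_getVert_le hG w k
  have h2 := TS.getVert_dist_le hG w hkle
  have h3 : G.dist x y ≤ G.dist x (w.getVert k) + G.dist (w.getVert k) y := hG.dist_triangle
  omega

/-- Projection: any intermediate distance value is realized on the way to `v`. -/
private lemma TS.exists_proj (hG : G.Connected) (x0 v : V) {k : ℕ} (hk : k ≤ G.dist x0 v) :
    ∃ z : V, G.dist x0 z = k ∧ G.dist z v = G.dist x0 v - k := by
  obtain ⟨w, hw⟩ := hG.exists_walk_length_eq_dist x0 v
  refine ⟨w.getVert k, ?_, ?_⟩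
  · have h1 := TS.dist_getVert_le hG w k
    have h2 := TS.getVert_dist_le hG w (le_of_le_of_eq hk hw.symm)
    have h3 : G.dist x0 v ≤ G.dist x0 (w.getVert k) + G.dist (w.getVert k) v := hG.dist_triangle
    omega
  · have h1 := TS.dist_getVert_le hG w k
    have h2 := TS.getVert_dist_le hG w (le_of_le_of_eq hk hw.symm)
    have h3 : G.dist x0 v ≤ G.dist x0 (w.getVert k) + G.dist (w.getVert k) v := hG.dist_triangle
    omega

private lemma TS.mem_support_append {x y z u : V} {w1 : G.Walk x y} {w2 : G.Walk y z}
    (hu : u ∈ (w1.append w2).support) : u ∈ w1.support ∨ u ∈ w2.support := by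
  rw [SimpleGraph.Walk.support_append] at hu
  rcases List.mem_append.mp hu with h | h
  · exact Or.inl h
  · exact Or.inr (List.mem_of_mem_tail h)

private lemma TS.mem_support_reverse {x y u : V} {w : G.Walk x y}
    (hu : u ∈ w.reverse.support) : u ∈ w.support := by
  rw [SimpleGraph.Walk.support_reverse] at hu
  exact List.mem_reverse.mp hu

variable {V : Type*} {G : SimpleGraph V}

private lemma TS.pairHdist_adj (hG : G.Connected) (a c c' : V) (h : G.Adj c c') :
    pairHdist G.dist a c a c' ≤ 1 := by
  have h0 : G.dist a a = 0 := SimpleGraph.dist_self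
  have h1 : G.dist c c' = 1 := dist_eq_one_iff_adj.mpr h
  simp only [pairHdist]
  omega

/-- Sliding lemma: if a walk from `c` to `e` stays at distance `> r1` from `a`,
then the side selected by `f` in `{a, ·}` is constant along the walk. -/
private lemma TS.slide (hG : G.Connected) {f : V → V → V}
    (hsel : ∀ a b, f a b = a ∨ f a b = b)
    {r1 : ℕ} (hmod : ∀ a b c e, pairHdist G.dist a b c e ≤ 1 → G.dist (f a b) (f c e) ≤ r1)
    (a : V) {c e : V} (w : G.Walk c e) (hw : ∀ z ∈ w.support, r1 < G.dist a z) :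
    (f a c = a ↔ f a e = a) := by
  induction w with
  | nil => rfl
  | @cons c c' e hadj w ih =>
    have hc : r1 < G.dist a c := hw c (by simp [SimpleGraph.Walk.support_cons])
    have hc' : r1 < G.dist a c' := hw c' (by simp [SimpleGraph.Walk.support_cons,
      SimpleGraph.Walk.start_mem_support])
    have hd := hmod a c a c' (TS.pairHdist_adj hG a c c' hadj)
    have step : f a c = a ↔ f a c' = a := by
      constructor
      · intro h1
        rcases hsel a c' with h2 | h2
        · exact h2
        · rw [h1, h2] at hd; omega
      · intro h1
        rcases hsel a c with h2 | h2
        · exact h2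
        · rw [h1, h2] at hd
          rw [SimpleGraph.dist_comm] at hd; omega
    exact step.trans (ih (fun z hz => hw z (by simp [SimpleGraph.Walk.support_cons, hz])))

private lemma TS.tripod_aux (hG : G.Connected) {f : V → V → V}
    (hsym : ∀ a b, f a b = f b a) (hsel : ∀ a b, f a b = a ∨ f a b = b)
    {r1 : ℕ} (hmod : ∀ a b c e, pairHdist G.dist a b c e ≤ 1 → G.dist (f a b) (f c e) ≤ r1)
    {a b c : V} (hfab : f a b = a)
    (wbc : G.Walk b c) (hbc : ∀ z ∈ wbc.support, r1 < G.dist a z)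
    (wac : G.Walk a c) (hac : ∀ z ∈ wac.support, r1 < G.dist b z)
    (wba : G.Walk b a) (hba : ∀ z ∈ wba.support, r1 < G.dist c z) : False := by
  have hab : r1 < G.dist a b := hbc b wbc.start_mem_support
  have hacd : r1 < G.dist a c := hbc c wbc.end_mem_support
  have hca : r1 < G.dist c a := hba a wba.end_mem_support
  have hcb : r1 < G.dist c b := hba b wba.start_mem_support
  have hba' : r1 < G.dist b a := hac a wac.start_mem_support
  have hne_ac : a ≠ c := by
    intro h; rw [h] at hacd; simp [SimpleGraph.dist_self] at hacd
  have hne_ab : a ≠ b := by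
    intro h; rw [h] at hab; simp [SimpleGraph.dist_self] at hab
  -- slide b → c with a fixed
  have h1 : f a c = a := (TS.slide hG hsel hmod a wbc hbc).mp hfab
  -- slide b → a with c fixed
  have h2 : f c b = c ↔ f c a = c := TS.slide hG hsel hmod c wba hba
  have h3 : f c a = a := (hsym c a).trans h1
  have h4 : f c b = b := by
    rcases hsel c b with h | h
    · exfalso; have := h2.mp h; rw [h3] at this; exact hne_ac this
    · exact h
  -- slide a → c with b fixed
  have h5 : f b a = b ↔ f b c = b := TS.slide hG hsel hmod b wac hac
  have h6 : f b c = b := (hsym b c).trans h4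
  have h7 : f b a = b := h5.mpr h6
  have h8 : f b a = a := (hsym b a).trans hfab
  exact hne_ab (h8.symm.trans h7)

/-- Tripod lemma: three points pairwise joined by walks avoiding the third. -/
private lemma TS.tripod (hG : G.Connected) {f : V → V → V}
    (hsym : ∀ a b, f a b = f b a) (hsel : ∀ a b, f a b = a ∨ f a b = b)
    {r1 : ℕ} (hmod : ∀ a b c e, pairHdist G.dist a b c e ≤ 1 → G.dist (f a b) (f c e) ≤ r1)
    {a b c : V}
    (wbc : G.Walk b c) (hbc : ∀ z ∈ wbc.support, r1 < G.dist a z)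
    (wac : G.Walk a c) (hac : ∀ z ∈ wac.support, r1 < G.dist b z)
    (wba : G.Walk b a) (hba : ∀ z ∈ wba.support, r1 < G.dist c z) : False := by
  rcases hsel a b with h | h
  · exact TS.tripod_aux hG hsym hsel hmod h wbc hbc wac hac wba hba
  · have h' : f b a = b := (hsym b a).trans h
    exact TS.tripod_aux hG hsym hsel hmod h' wac hac wbc hbc wba.reverse
      (fun z hz => hba z (TS.mem_support_reverse hz))
end Helpers
section Geometry
variable {V : Type*} {G : SimpleGraph V}

/-- Two far points on the same sphere around `x0` must be nearly antipodal. -/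
private lemma TS.far_pair_antipodal (hG : G.Connected) {f : V → V → V}
    (hsym : ∀ a b, f a b = f b a) (hsel : ∀ a b, f a b = a ∨ f a b = b)
    {r1 : ℕ} (hmod : ∀ a b c e, pairHdist G.dist a b c e ≤ 1 → G.dist (f a b) (f c e) ≤ r1)
    (x0 : V) {n : ℕ} {x y : V} (hx : G.dist x0 x = n) (hy : G.dist x0 y = n)
    (hfar : 2*r1+2 < G.dist x y) : 2*n ≤ G.dist x y + (2*r1+2) := by
  by_contra hcon
  push_neg at hcon
  obtain ⟨wxy, hwxy⟩ := hG.exists_walk_length_eq_dist x y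
  obtain ⟨wy, hwy⟩ := hG.exists_walk_length_eq_dist x0 y
  obtain ⟨wx, hwx⟩ := hG.exists_walk_length_eq_dist x0 x
  refine TS.tripod hG hsym hsel hmod (a := x0) (b := x) (c := y) wxy ?_ wy ?_ wx.reverse ?_
  · intro z hz
    have e1 := TS.geodesic_support hG wxy hwxy hz
    have t1 : G.dist x0 x ≤ G.dist x0 z + G.dist z x := hG.dist_triangle
    have t2 : G.dist x0 y ≤ G.dist x0 z + G.dist z y := hG.dist_triangle
    have c1 : G.dist z x = G.dist x z := SimpleGraph.dist_comm
    omega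
  · intro z hz
    have e1 := TS.geodesic_support hG wy hwy hz
    have t1 : G.dist x y ≤ G.dist x z + G.dist z y := hG.dist_triangle
    have t2 : G.dist x0 x ≤ G.dist x0 z + G.dist z x := hG.dist_triangle
    have c1 : G.dist z x = G.dist x z := SimpleGraph.dist_comm
    omega
  · intro z hz
    have hz' := TS.mem_support_reverse hz
    have e1 := TS.geodesic_support hG wx hwx hz'
    have t1 : G.dist x y ≤ G.dist x z + G.dist z y := hG.dist_triangle
    have t2 : G.dist x0 y ≤ G.dist x0 z + G.dist z y := hG.dist_triangle
    have c1 : G.dist z y = G.dist y z := SimpleGraph.dist_comm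
    have c2 : G.dist z x = G.dist x z := SimpleGraph.dist_comm
    omega

/-- A walk from `y` to `z` through `x0`, staying far from `x`. -/
private lemma TS.x0walk (hG : G.Connected) {r1 : ℕ} (x0 : V) {n : ℕ} {x y z : V}
    (hx : G.dist x0 x = n) (hy : G.dist x0 y = n) (hz : G.dist x0 z = n)
    (hxy : 2*r1+2 < G.dist x y) (hxz : 2*r1+2 < G.dist x z) :
    ∃ w : G.Walk y z, ∀ u ∈ w.support, r1 < G.dist x u := by
  obtain ⟨wy, hwy⟩ := hG.exists_walk_length_eq_dist x0 y
  obtain ⟨wz, hwz⟩ := hG.exists_walk_length_eq_dist x0 z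
  refine ⟨wy.reverse.append wz, ?_⟩
  intro u hu
  rcases TS.mem_support_append hu with h | h
  · have h' := TS.mem_support_reverse h
    have e1 := TS.geodesic_support hG wy hwy h'
    have t1 : G.dist x y ≤ G.dist x u + G.dist u y := hG.dist_triangle
    have t2 : G.dist x0 x ≤ G.dist x0 u + G.dist u x := hG.dist_triangle
    have c1 : G.dist u x = G.dist x u := SimpleGraph.dist_comm
    omega
  · have e1 := TS.geodesic_support hG wz hwz h
    have t1 : G.dist x z ≤ G.dist x u + G.dist u z := hG.dist_triangle
    have t2 : G.dist x0 x ≤ G.dist x0 u + G.dist u x := hG.dist_triangle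
    have c1 : G.dist u x = G.dist x u := SimpleGraph.dist_comm
    omega

/-- No three pairwise-far points on a common sphere. -/
private lemma TS.not_three_far (hG : G.Connected) {f : V → V → V}
    (hsym : ∀ a b, f a b = f b a) (hsel : ∀ a b, f a b = a ∨ f a b = b)
    {r1 : ℕ} (hmod : ∀ a b c e, pairHdist G.dist a b c e ≤ 1 → G.dist (f a b) (f c e) ≤ r1)
    (x0 : V) {n : ℕ} {x y z : V}
    (hx : G.dist x0 x = n) (hy : G.dist x0 y = n) (hz : G.dist x0 z = n)
    (hxy : 2*r1+2 < G.dist x y) (hxz : 2*r1+2 < G.dist x z)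
    (hyz : 2*r1+2 < G.dist y z) : False := by
  obtain ⟨w1, hw1⟩ := TS.x0walk hG x0 hx hy hz hxy hxz
  have hyx : 2*r1+2 < G.dist y x := by rwa [SimpleGraph.dist_comm] at hxy
  have hzx : 2*r1+2 < G.dist z x := by rwa [SimpleGraph.dist_comm] at hxz
  have hzy : 2*r1+2 < G.dist z y := by rwa [SimpleGraph.dist_comm] at hyz
  obtain ⟨w2, hw2⟩ := TS.x0walk hG x0 hy hx hz hyx hyz
  obtain ⟨w3, hw3⟩ := TS.x0walk hG x0 hz hy hx hzy hzx
  exact TS.tripod hG hsym hsel hmod (a := x) (b := y) (c := z) w1 hw1 w2 hw2 w3 hw3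

/-- Two nearly antipodal points on a sphere cannot be joined by a walk avoiding
the ball around `x0`. -/
private lemma TS.highconn (hG : G.Connected) {f : V → V → V}
    (hsym : ∀ a b, f a b = f b a) (hsel : ∀ a b, f a b = a ∨ f a b = b)
    {r1 : ℕ} (hmod : ∀ a b c e, pairHdist G.dist a b c e ≤ 1 → G.dist (f a b) (f c e) ≤ r1)
    (x0 : V) {n : ℕ} {x y : V} (hx : G.dist x0 x = n) (hy : G.dist x0 y = n)
    (hn : 2*r1+2 ≤ n) (hanti : 2*n ≤ G.dist x y + (2*r1+2))
    (w : G.Walk x y) (hw : ∀ z ∈ w.support, r1 < G.dist x0 z) : False := by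
  obtain ⟨wy, hwy⟩ := hG.exists_walk_length_eq_dist x0 y
  obtain ⟨wx, hwx⟩ := hG.exists_walk_length_eq_dist x0 x
  have hdxy : G.dist x y ≤ 2*n := by
    have t : G.dist x y ≤ G.dist x x0 + G.dist x0 y := hG.dist_triangle
    have c : G.dist x x0 = G.dist x0 x := SimpleGraph.dist_comm
    omega
  refine TS.tripod hG hsym hsel hmod (a := x0) (b := x) (c := y) w hw wy ?_ wx.reverse ?_
  · intro z hz
    have e1 := TS.geodesic_support hG wy hwy hz
    have t1 : G.dist x y ≤ G.dist x z + G.dist z y := hG.dist_triangle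
    have t2 : G.dist x0 x ≤ G.dist x0 z + G.dist z x := hG.dist_triangle
    have c1 : G.dist z x = G.dist x z := SimpleGraph.dist_comm
    omega
  · intro z hz
    have hz' := TS.mem_support_reverse hz
    have e1 := TS.geodesic_support hG wx hwx hz'
    have t1 : G.dist x y ≤ G.dist x z + G.dist z y := hG.dist_triangle
    have t2 : G.dist x0 y ≤ G.dist x0 z + G.dist z y := hG.dist_triangle
    have c1 : G.dist z y = G.dist y z := SimpleGraph.dist_comm
    have c2 : G.dist z x = G.dist x z := SimpleGraph.dist_comm
    omega
end Geometry
section Consist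
variable {V : Type*} {G : SimpleGraph V}

/-- A geodesic from a projection point up to `x` stays outside the `k`-ball. -/
private lemma TS.walk_from_proj (hG : G.Connected) (x0 : V) {x z : V} {k : ℕ}
    (hz1 : G.dist x0 z = k) (hz2 : G.dist z x = G.dist x0 x - k) (hk : k ≤ G.dist x0 x) :
    ∃ w : G.Walk z x, ∀ u ∈ w.support, k ≤ G.dist x0 u := by
  obtain ⟨w, hw⟩ := hG.exists_walk_length_eq_dist z x
  refine ⟨w, ?_⟩
  intro u hu
  have e1 := TS.geodesic_support hG w hw hu
  have t1 : G.dist x0 x ≤ G.dist x0 u + G.dist u x := hG.dist_triangle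
  have t2 : G.dist x0 x ≤ G.dist x0 z + G.dist z x := hG.dist_triangle
  omega

/-- Any two projections of `x` to the sphere of radius `k` are close. -/
private lemma TS.proj_close (hG : G.Connected) {f : V → V → V}
    (hsym : ∀ a b, f a b = f b a) (hsel : ∀ a b, f a b = a ∨ f a b = b)
    {r1 : ℕ} (hmod : ∀ a b c e, pairHdist G.dist a b c e ≤ 1 → G.dist (f a b) (f c e) ≤ r1)
    (x0 : V) {x z z' : V} {k : ℕ} (hk : 2*r1+2 ≤ k) (hkx : k ≤ G.dist x0 x)
    (hz1 : G.dist x0 z = k) (hz2 : G.dist z x = G.dist x0 x - k)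
    (hz1' : G.dist x0 z' = k) (hz2' : G.dist z' x = G.dist x0 x - k) :
    G.dist z z' ≤ 2*r1+2 := by
  by_contra hcon
  push_neg at hcon
  have hanti := TS.far_pair_antipodal hG hsym hsel hmod x0 hz1 hz1' hcon
  obtain ⟨w1, hw1⟩ := TS.walk_from_proj hG x0 hz1 hz2 hkx
  obtain ⟨w2, hw2⟩ := TS.walk_from_proj hG x0 hz1' hz2' hkx
  refine TS.highconn hG hsym hsel hmod x0 hz1 hz1' hk hanti (w1.append w2.reverse) ?_
  intro u hu
  rcases TS.mem_support_append hu with h | h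
  · have := hw1 u h; omega
  · have := hw2 u (TS.mem_support_reverse h); omega

/-- Cross-level dichotomy: two points are either "on the same side"
(distance about the height difference) or nearly antipodal. -/
private lemma TS.consist (hG : G.Connected) {f : V → V → V}
    (hsym : ∀ a b, f a b = f b a) (hsel : ∀ a b, f a b = a ∨ f a b = b)
    {r1 : ℕ} (hmod : ∀ a b c e, pairHdist G.dist a b c e ≤ 1 → G.dist (f a b) (f c e) ≤ r1)
    (x0 : V) {x y : V} (hle : G.dist x0 x ≤ G.dist x0 y) (hn : 2*r1+2 ≤ G.dist x0 x) :
    G.dist x y ≤ (G.dist x0 y - G.dist x0 x) + (2*r1+2) ∨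
      G.dist x0 x + G.dist x0 y ≤ G.dist x y + (4*r1+4) := by
  obtain ⟨y', hy'1, hy'2⟩ := TS.exists_proj hG x0 y hle
  by_cases hQ : G.dist x y' ≤ 2*r1+2
  · left
    have t : G.dist x y ≤ G.dist x y' + G.dist y' y := hG.dist_triangle
    omega
  · right
    push_neg at hQ
    by_contra hcon
    push_neg at hcon
    have hanti := TS.far_pair_antipodal hG hsym hsel hmod x0 (n := G.dist x0 x) rfl hy'1 hQ
    obtain ⟨wxy, hwxy⟩ := hG.exists_walk_length_eq_dist x y
    obtain ⟨wy', hwy'⟩ := hG.exists_walk_length_eq_dist y' y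
    refine TS.highconn hG hsym hsel hmod x0 (n := G.dist x0 x) rfl hy'1 hn hanti
      (wxy.append wy'.reverse) ?_
    intro u hu
    rcases TS.mem_support_append hu with h | h
    · have e1 := TS.geodesic_support hG wxy hwxy h
      have t1 : G.dist x0 x ≤ G.dist x0 u + G.dist u x := hG.dist_triangle
      have t2 : G.dist x0 y ≤ G.dist x0 u + G.dist u y := hG.dist_triangle
      have c1 : G.dist u x = G.dist x u := SimpleGraph.dist_comm
      omega
    · have h' := TS.mem_support_reverse h
      have e1 := TS.geodesic_support hG wy' hwy' h'
      have t1 : G.dist x0 y ≤ G.dist x0 u + G.dist u y := hG.dist_triangle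
      omega
end Consist
section Sigma
variable {V : Type*} {G : SimpleGraph V}

/-- The side of `x` relative to basepoint `x0` and reference point `a1` on the
sphere of radius `n1`. -/
private def TS.sigma (G : SimpleGraph V) (x0 a1 : V) (n1 r1 : ℕ) (x : V) : Prop :=
  ∃ z, G.dist x0 z = n1 ∧ G.dist z x = G.dist x0 x - n1 ∧ G.dist z a1 ≤ 2*r1+2

private lemma TS.sigma_iff (hG : G.Connected) {f : V → V → V}
    (hsym : ∀ a b, f a b = f b a) (hsel : ∀ a b, f a b = a ∨ f a b = b)
    {r1 : ℕ} (hmod : ∀ a b c e, pairHdist G.dist a b c e ≤ 1 → G.dist (f a b) (f c e) ≤ r1)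
    {x0 a1 : V} {n1 : ℕ} (ha1 : G.dist x0 a1 = n1) (hn1 : 10*r1+100 ≤ n1)
    {x z : V} (hx : n1 ≤ G.dist x0 x)
    (hz1 : G.dist x0 z = n1) (hz2 : G.dist z x = G.dist x0 x - n1) :
    TS.sigma G x0 a1 n1 r1 x ↔ G.dist z a1 ≤ 2*r1+2 := by
  constructor
  · rintro ⟨z0, h01, h02, h03⟩
    have hcl := TS.proj_close hG hsym hsel hmod x0 (k := n1) (by omega) hx h01 h02 hz1 hz2
    have t : G.dist z a1 ≤ G.dist z z0 + G.dist z0 a1 := hG.dist_triangle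
    have c : G.dist z z0 = G.dist z0 z := SimpleGraph.dist_comm
    by_contra hQ
    push_neg at hQ
    have hanti := TS.far_pair_antipodal hG hsym hsel hmod x0 hz1 ha1 hQ
    omega
  · intro h
    exact ⟨z, hz1, hz2, h⟩

private lemma TS.sigma_opp (hG : G.Connected) {f : V → V → V}
    (hsym : ∀ a b, f a b = f b a) (hsel : ∀ a b, f a b = a ∨ f a b = b)
    {r1 : ℕ} (hmod : ∀ a b c e, pairHdist G.dist a b c e ≤ 1 → G.dist (f a b) (f c e) ≤ r1)
    {x0 a1 : V} {n1 : ℕ} (ha1 : G.dist x0 a1 = n1) (hn1 : 10*r1+100 ≤ n1)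
    {x y p q : V} (hx : n1 ≤ G.dist x0 x) (hy : n1 ≤ G.dist x0 y)
    (hp1 : G.dist x0 p = n1) (hp2 : G.dist p x = G.dist x0 x - n1)
    (hq1 : G.dist x0 q = n1) (hq2 : G.dist q y = G.dist x0 y - n1)
    (hfar2 : 2*(2*r1+2) < G.dist p q) :
    (TS.sigma G x0 a1 n1 r1 x ↔ ¬ TS.sigma G x0 a1 n1 r1 y) := by
  rw [TS.sigma_iff hG hsym hsel hmod ha1 hn1 hx hp1 hp2,
    TS.sigma_iff hG hsym hsel hmod ha1 hn1 hy hq1 hq2]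
  constructor
  · intro h1 h2
    have t : G.dist p q ≤ G.dist p a1 + G.dist a1 q := hG.dist_triangle
    have c : G.dist a1 q = G.dist q a1 := SimpleGraph.dist_comm
    omega
  · intro h1
    by_contra h2
    push_neg at h2
    have hpq : 2*r1+2 < G.dist p q := by omega
    have hpa : 2*r1+2 < G.dist p a1 := by omega
    have hqa : 2*r1+2 < G.dist q a1 := by
      push_neg at h1; omega
    exact TS.not_three_far hG hsym hsel hmod x0 hp1 hq1 ha1 hpq hpa hqa

/-- Two far points on a common sphere have opposite sides. -/
private lemma TS.sigma_ne_far (hG : G.Connected) {f : V → V → V}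
    (hsym : ∀ a b, f a b = f b a) (hsel : ∀ a b, f a b = a ∨ f a b = b)
    {r1 : ℕ} (hmod : ∀ a b c e, pairHdist G.dist a b c e ≤ 1 → G.dist (f a b) (f c e) ≤ r1)
    {x0 a1 : V} {n1 : ℕ} (ha1 : G.dist x0 a1 = n1) (hn1 : 10*r1+100 ≤ n1)
    {m : ℕ} {x y : V} (hx : G.dist x0 x = m) (hy : G.dist x0 y = m) (hm : n1 ≤ m)
    (hfar : 2*r1+2 < G.dist x y) :
    (TS.sigma G x0 a1 n1 r1 x ↔ ¬ TS.sigma G x0 a1 n1 r1 y) := by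
  have hanti := TS.far_pair_antipodal hG hsym hsel hmod x0 hx hy hfar
  obtain ⟨p, hp1, hp2⟩ := TS.exists_proj hG x0 x (k := n1) (by omega)
  obtain ⟨q, hq1, hq2⟩ := TS.exists_proj hG x0 y (k := n1) (by omega)
  have t : G.dist x y ≤ G.dist x p + (G.dist p q + G.dist q y) :=
    hG.dist_triangle.trans (by gcongr; exact hG.dist_triangle)
  have c : G.dist x p = G.dist p x := SimpleGraph.dist_comm
  exact TS.sigma_opp hG hsym hsel hmod ha1 hn1 (by omega) (by omega) hp1 hp2 hq1 hq2 (by omega)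

/-- Points on the same side are close up to the height difference. -/
private lemma TS.same_side_close (hG : G.Connected) {f : V → V → V}
    (hsym : ∀ a b, f a b = f b a) (hsel : ∀ a b, f a b = a ∨ f a b = b)
    {r1 : ℕ} (hmod : ∀ a b c e, pairHdist G.dist a b c e ≤ 1 → G.dist (f a b) (f c e) ≤ r1)
    {x0 a1 : V} {n1 : ℕ} (ha1 : G.dist x0 a1 = n1) (hn1 : 10*r1+100 ≤ n1)
    {x y : V} (hx0 : 2*n1 ≤ G.dist x0 x) (hy0 : 2*n1 ≤ G.dist x0 y)
    (hle : G.dist x0 x ≤ G.dist x0 y)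
    (hσ : TS.sigma G x0 a1 n1 r1 x ↔ TS.sigma G x0 a1 n1 r1 y) :
    G.dist x y ≤ (G.dist x0 y - G.dist x0 x) + (2*r1+2) := by
  rcases TS.consist hG hsym hsel hmod x0 hle (by omega) with h | h
  · exact h
  · exfalso
    obtain ⟨p, hp1, hp2⟩ := TS.exists_proj hG x0 x (k := n1) (by omega)
    obtain ⟨q, hq1, hq2⟩ := TS.exists_proj hG x0 y (k := n1) (by omega)
    have t : G.dist x y ≤ G.dist x p + (G.dist p q + G.dist q y) :=
      hG.dist_triangle.trans (by gcongr; exact hG.dist_triangle)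
    have c : G.dist x p = G.dist p x := SimpleGraph.dist_comm
    have hopp := TS.sigma_opp hG hsym hsel hmod ha1 hn1 (by omega) (by omega) hp1 hp2 hq1 hq2
      (by omega)
    tauto

/-- Points on opposite sides are nearly antipodal. -/
private lemma TS.opp_side_antipodal (hG : G.Connected) {f : V → V → V}
    (hsym : ∀ a b, f a b = f b a) (hsel : ∀ a b, f a b = a ∨ f a b = b)
    {r1 : ℕ} (hmod : ∀ a b c e, pairHdist G.dist a b c e ≤ 1 → G.dist (f a b) (f c e) ≤ r1)
    {x0 a1 : V} {n1 : ℕ} (ha1 : G.dist x0 a1 = n1) (hn1 : 10*r1+100 ≤ n1)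
    {x y : V} (hx0 : 2*n1 ≤ G.dist x0 x) (hy0 : 2*n1 ≤ G.dist x0 y)
    (hle : G.dist x0 x ≤ G.dist x0 y)
    (hσ : ¬ (TS.sigma G x0 a1 n1 r1 x ↔ TS.sigma G x0 a1 n1 r1 y)) :
    G.dist x0 x + G.dist x0 y ≤ G.dist x y + (4*r1+4) := by
  rcases TS.consist hG hsym hsel hmod x0 hle (by omega) with h | h
  swap
  · exact h
  exfalso
  obtain ⟨p, hp1, hp2⟩ := TS.exists_proj hG x0 x (k := n1) (by omega)
  obtain ⟨q, hq1, hq2⟩ := TS.exists_proj hG x0 y (k := n1) (by omega)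
  have hpq : G.dist p q ≤ 2*r1+2 := by
    by_contra hcon
    push_neg at hcon
    have hanti := TS.far_pair_antipodal hG hsym hsel hmod x0 hp1 hq1 hcon
    obtain ⟨w1, hw1⟩ := TS.walk_from_proj hG x0 hp1 hp2 (by omega)
    obtain ⟨w2, hw2⟩ := TS.walk_from_proj hG x0 hq1 hq2 (by omega)
    obtain ⟨wxy, hwxy⟩ := hG.exists_walk_length_eq_dist x y
    refine TS.highconn hG hsym hsel hmod x0 hp1 hq1 (by omega) hanti
      (w1.append (wxy.append w2.reverse)) ?_
    intro u hu
    rcases TS.mem_support_append hu with h1 | h1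
    · have := hw1 u h1; omega
    rcases TS.mem_support_append h1 with h2 | h2
    · have e1 := TS.geodesic_support hG wxy hwxy h2
      have t1 : G.dist x0 x ≤ G.dist x0 u + G.dist u x := hG.dist_triangle
      have t2 : G.dist x0 y ≤ G.dist x0 u + G.dist u y := hG.dist_triangle
      have c1 : G.dist u x = G.dist x u := SimpleGraph.dist_comm
      omega
    · have := hw2 u (TS.mem_support_reverse h2); omega
  apply hσ
  rw [TS.sigma_iff hG hsym hsel hmod ha1 hn1 (by omega) hp1 hp2,
    TS.sigma_iff hG hsym hsel hmod ha1 hn1 (by omega) hq1 hq2]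
  have t1 : G.dist q a1 ≤ G.dist q p + G.dist p a1 := hG.dist_triangle
  have t2 : G.dist p a1 ≤ G.dist p q + G.dist q a1 := hG.dist_triangle
  have c1 : G.dist q p = G.dist p q := SimpleGraph.dist_comm
  constructor
  · intro h1
    by_contra h2
    push_neg at h2
    have := TS.far_pair_antipodal hG hsym hsel hmod x0 hq1 ha1 (by omega)
    omega
  · intro h1
    by_contra h2
    push_neg at h2
    have := TS.far_pair_antipodal hG hsym hsel hmod x0 hp1 ha1 (by omega)
    omega

/-- In the unbounded-sphere case both sides are realized on every high sphere. -/
private lemma TS.both_signs (hG : G.Connected) {f : V → V → V}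
    (hsym : ∀ a b, f a b = f b a) (hsel : ∀ a b, f a b = a ∨ f a b = b)
    {r1 : ℕ} (hmod : ∀ a b c e, pairHdist G.dist a b c e ≤ 1 → G.dist (f a b) (f c e) ≤ r1)
    {x0 a1 : V} {n1 : ℕ} (ha1 : G.dist x0 a1 = n1) (hn1 : 10*r1+100 ≤ n1)
    (hB : ∀ N, ∃ n, N ≤ n ∧ ∃ u v : V, G.dist x0 u = n ∧ G.dist x0 v = n ∧
      2*r1+2 < G.dist u v)
    {m : ℕ} (hm : 2*n1 ≤ m) :
    ∃ x y : V, G.dist x0 x = m ∧ G.dist x0 y = m ∧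
      TS.sigma G x0 a1 n1 r1 x ∧ ¬ TS.sigma G x0 a1 n1 r1 y := by
  obtain ⟨n, hn, u, v, hu, hv, hfar⟩ := hB m
  have hanti := TS.far_pair_antipodal hG hsym hsel hmod x0 hu hv hfar
  obtain ⟨zu, hzu1, hzu2⟩ := TS.exists_proj hG x0 u (k := m) (by omega)
  obtain ⟨zv, hzv1, hzv2⟩ := TS.exists_proj hG x0 v (k := m) (by omega)
  have t : G.dist u v ≤ G.dist u zu + (G.dist zu zv + G.dist zv v) :=
    hG.dist_triangle.trans (by gcongr; exact hG.dist_triangle)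
  have c : G.dist u zu = G.dist zu u := SimpleGraph.dist_comm
  have hfar' : 2*r1+2 < G.dist zu zv := by omega
  have hne := TS.sigma_ne_far hG hsym hsel hmod ha1 hn1 hzu1 hzv1 (by omega) hfar'
  by_cases hσ : TS.sigma G x0 a1 n1 r1 zu
  · exact ⟨zu, zv, hzu1, hzv1, hσ, hne.mp hσ⟩
  · refine ⟨zv, zu, hzv1, hzu1, ?_, hσ⟩
    by_contra h2
    exact hσ (hne.mpr h2)
end Sigma
section Converse
variable {V : Type*} {G : SimpleGraph V}

private lemma TS.selector_of_embed (hG : G.Connected) {ψ : V → ℝ} {L C : ℝ}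
    (hL : 1 ≤ L) (hC : 0 ≤ C)
    (hup : ∀ x y : V, |ψ x - ψ y| ≤ L * G.dist x y + C)
    (hlow : ∀ x y : V, (G.dist x y : ℝ) ≤ L * |ψ x - ψ y| + C) :
    ∃ f : V → V → V, IsTwoSelector G f := by
  classical
  letI : LinearOrder V := IsWellOrder.linearOrder WellOrderingRel
  refine ⟨fun a b => if ψ a < ψ b then a else if ψ b < ψ a then b else min a b, ?_, ?_, ?_⟩
  · intro a b
    rcases lt_trichotomy (ψ a) (ψ b) with h | h | h
    · simp [h, not_lt.mpr h.le, lt_irrefl]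
    · simp [h, lt_irrefl, min_comm]
    · simp [h, not_lt.mpr h.le, lt_irrefl]
  · intro a b
    by_cases h1 : ψ a < ψ b
    · simp [h1]
    by_cases h2 : ψ b < ψ a
    · simp [h1, h2]
    · simp only [h1, h2, if_false]
      rcases le_total a b with h | h
      · left; simp [min_eq_left h]
      · right; simp [min_eq_right h]
  · intro r
    have hψ : ∀ a b, ψ (if ψ a < ψ b then a else if ψ b < ψ a then b else min a b)
        = min (ψ a) (ψ b) := by
      intro a b
      by_cases h1 : ψ a < ψ b
      · simp [h1, min_eq_left h1.le]
      by_cases h2 : ψ b < ψ a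
      · simp [h1, h2, min_eq_right h2.le]
      · have he : ψ a = ψ b := le_antisymm (not_lt.mp h2) (not_lt.mp h1)
        simp only [h1, h2, if_false]
        rcases le_total a b with h | h
        · simp [min_eq_left h, he, min_self]
        · simp [min_eq_right h, he, min_self]
    have est : ∀ u w : V, G.dist u w ≤ r → ψ w ≤ ψ u + (L*r + C) := by
      intro u w h
      have h1 := hup u w
      have h2 : L * G.dist u w ≤ L * r := by
        have : (G.dist u w : ℝ) ≤ r := by exact_mod_cast h
        have hL0 : (0:ℝ) ≤ L := by linarith
        exact mul_le_mul_of_nonneg_left this hL0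
      have h3 : |ψ u - ψ w| ≤ L*r + C := by linarith
      have := abs_le.mp h3
      linarith [this.1, this.2]
    refine ⟨⌈L*(L*r+C)+C⌉₊, ?_⟩
    intro a b c e hp
    simp only [pairHdist, max_le_iff, min_le_iff] at hp
    obtain ⟨⟨hac_ae, hbc_be⟩, hc_ab, he_ab⟩ := hp
    have key : |ψ (if ψ a < ψ b then a else if ψ b < ψ a then b else min a b)
        - ψ (if ψ c < ψ e then c else if ψ e < ψ c then e else min c e)| ≤ L*r + C := by
      rw [hψ, hψ, abs_le]
      constructor
      · -- min ψc ψe - (Lr+C) ≤ min ψa ψb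
        have ha : min (ψ c) (ψ e) ≤ ψ a + (L*r+C) := by
          rcases hac_ae with h | h
          · exact (min_le_left _ _).trans (est a c h)
          · exact (min_le_right _ _).trans (est a e h)
        have hb : min (ψ c) (ψ e) ≤ ψ b + (L*r+C) := by
          rcases hbc_be with h | h
          · exact (min_le_left _ _).trans (est b c h)
          · exact (min_le_right _ _).trans (est b e h)
        have := le_min (by linarith : min (ψ c) (ψ e) - (L*r+C) ≤ ψ a)
          (by linarith : min (ψ c) (ψ e) - (L*r+C) ≤ ψ b)
        linarith
      · -- min ψa ψb ≤ min ψc ψe + (Lr+C)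
        have hc' : min (ψ a) (ψ b) ≤ ψ c + (L*r+C) := by
          rcases hc_ab with h | h
          · exact (min_le_left _ _).trans (est c a (by rwa [SimpleGraph.dist_comm]))
          · exact (min_le_right _ _).trans (est c b (by rwa [SimpleGraph.dist_comm]))
        have he' : min (ψ a) (ψ b) ≤ ψ e + (L*r+C) := by
          rcases he_ab with h | h
          · exact (min_le_left _ _).trans (est e a (by rwa [SimpleGraph.dist_comm]))
          · exact (min_le_right _ _).trans (est e b (by rwa [SimpleGraph.dist_comm]))
        have := le_min (by linarith : min (ψ a) (ψ b) - (L*r+C) ≤ ψ c)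
          (by linarith : min (ψ a) (ψ b) - (L*r+C) ≤ ψ e)
        linarith
    have hfin := hlow (if ψ a < ψ b then a else if ψ b < ψ a then b else min a b)
      (if ψ c < ψ e then c else if ψ e < ψ c then e else min c e)
    have hL0 : (0:ℝ) ≤ L := by linarith
    have h2 : (G.dist (if ψ a < ψ b then a else if ψ b < ψ a then b else min a b)
        (if ψ c < ψ e then c else if ψ e < ψ c then e else min c e) : ℝ)
        ≤ L*(L*r+C)+C := by
      have := mul_le_mul_of_nonneg_left key hL0
      linarith
    have h3 := h2.trans (Nat.le_ceil _)
    exact_mod_cast h3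
end Converse
section Phi
variable {V : Type*} {G : SimpleGraph V}

open Classical in
/-- The signed height function used in the line case. -/
private noncomputable def TS.phi (G : SimpleGraph V) (x0 a1 : V) (n1 r1 : ℕ) (x : V) : ℤ :=
  if 2*n1 ≤ G.dist x0 x then
    (if TS.sigma G x0 a1 n1 r1 x then (G.dist x0 x : ℤ) else -(G.dist x0 x : ℤ))
  else 0

private lemma TS.phi_bound (hG : G.Connected) {f : V → V → V}
    (hsym : ∀ a b, f a b = f b a) (hsel : ∀ a b, f a b = a ∨ f a b = b)
    {r1 : ℕ} (hmod : ∀ a b c e, pairHdist G.dist a b c e ≤ 1 → G.dist (f a b) (f c e) ≤ r1)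
    {x0 a1 : V} {n1 : ℕ} (ha1 : G.dist x0 a1 = n1) (hn1 : 10*r1+100 ≤ n1)
    (x y : V) :
    |TS.phi G x0 a1 n1 r1 x - TS.phi G x0 a1 n1 r1 y| ≤ (G.dist x y : ℤ) + (8*n1+8*r1+8) ∧
    (G.dist x y : ℤ) ≤ |TS.phi G x0 a1 n1 r1 x - TS.phi G x0 a1 n1 r1 y| + (8*n1+8*r1+8) := by
  have t1 : G.dist x0 x ≤ G.dist x0 y + G.dist y x := hG.dist_triangle
  have t2 : G.dist x0 y ≤ G.dist x0 x + G.dist x y := hG.dist_triangle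
  have t3 : G.dist x y ≤ G.dist x x0 + G.dist x0 y := hG.dist_triangle
  have c1 : G.dist y x = G.dist x y := SimpleGraph.dist_comm
  have c2 : G.dist x x0 = G.dist x0 x := SimpleGraph.dist_comm
  by_cases hx2 : 2*n1 ≤ G.dist x0 x
  · by_cases hy2 : 2*n1 ≤ G.dist x0 y
    · by_cases hσx : TS.sigma G x0 a1 n1 r1 x
      · by_cases hσy : TS.sigma G x0 a1 n1 r1 y
        · -- same side (+,+)
          have hcl : G.dist x y + G.dist x0 x ≤ G.dist x0 y + (2*r1+2) ∨
              G.dist x y + G.dist x0 y ≤ G.dist x0 x + (2*r1+2) := by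
            rcases le_total (G.dist x0 x) (G.dist x0 y) with h | h
            · left
              have := TS.same_side_close hG hsym hsel hmod ha1 hn1 hx2 hy2 h
                (iff_of_true hσx hσy)
              omega
            · right
              have := TS.same_side_close hG hsym hsel hmod ha1 hn1 hy2 hx2 h
                (iff_of_true hσy hσx)
              have c : G.dist y x = G.dist x y := SimpleGraph.dist_comm
              omega
          simp only [TS.phi, if_pos hx2, if_pos hy2, if_pos hσx, if_pos hσy]
          rcases abs_cases ((G.dist x0 x : ℤ) - (G.dist x0 y : ℤ)) with ⟨he, _⟩ | ⟨he, _⟩ <;>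
            rw [he] <;> omega
        · -- opposite sides
          have hanti : G.dist x0 x + G.dist x0 y ≤ G.dist x y + (4*r1+4) := by
            rcases le_total (G.dist x0 x) (G.dist x0 y) with h | h
            · exact TS.opp_side_antipodal hG hsym hsel hmod ha1 hn1 hx2 hy2 h
                (by tauto)
            · have := TS.opp_side_antipodal hG hsym hsel hmod ha1 hn1 hy2 hx2 h
                (by tauto)
              have c : G.dist y x = G.dist x y := SimpleGraph.dist_comm
              omega
          simp only [TS.phi, if_pos hx2, if_pos hy2, if_pos hσx, if_neg hσy]
          rcases abs_cases ((G.dist x0 x : ℤ) - -(G.dist x0 y : ℤ)) with ⟨he, _⟩ | ⟨he, _⟩ <;>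
            rw [he] <;> omega
      · by_cases hσy : TS.sigma G x0 a1 n1 r1 y
        · -- opposite sides
          have hanti : G.dist x0 x + G.dist x0 y ≤ G.dist x y + (4*r1+4) := by
            rcases le_total (G.dist x0 x) (G.dist x0 y) with h | h
            · exact TS.opp_side_antipodal hG hsym hsel hmod ha1 hn1 hx2 hy2 h
                (by tauto)
            · have := TS.opp_side_antipodal hG hsym hsel hmod ha1 hn1 hy2 hx2 h
                (by tauto)
              have c : G.dist y x = G.dist x y := SimpleGraph.dist_comm
              omega
          simp only [TS.phi, if_pos hx2, if_pos hy2, if_neg hσx, if_pos hσy]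
          rcases abs_cases (-(G.dist x0 x : ℤ) - (G.dist x0 y : ℤ)) with ⟨he, _⟩ | ⟨he, _⟩ <;>
            rw [he] <;> omega
        · -- same side (-,-)
          have hcl : G.dist x y + G.dist x0 x ≤ G.dist x0 y + (2*r1+2) ∨
              G.dist x y + G.dist x0 y ≤ G.dist x0 x + (2*r1+2) := by
            rcases le_total (G.dist x0 x) (G.dist x0 y) with h | h
            · left
              have := TS.same_side_close hG hsym hsel hmod ha1 hn1 hx2 hy2 h
                (iff_of_false hσx hσy)
              omega
            · right
              have := TS.same_side_close hG hsym hsel hmod ha1 hn1 hy2 hx2 h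
                (iff_of_false hσy hσx)
              have c : G.dist y x = G.dist x y := SimpleGraph.dist_comm
              omega
          simp only [TS.phi, if_pos hx2, if_pos hy2, if_neg hσx, if_neg hσy]
          rcases abs_cases (-(G.dist x0 x : ℤ) - -(G.dist x0 y : ℤ)) with ⟨he, _⟩ | ⟨he, _⟩ <;>
            rw [he] <;> omega
    · -- x high, y low
      simp only [TS.phi, if_pos hx2, if_neg hy2]
      by_cases hσx : TS.sigma G x0 a1 n1 r1 x <;>
        simp only [if_pos, if_neg, hσx, if_true, if_false] <;>
        [rcases abs_cases ((G.dist x0 x : ℤ) - 0) with ⟨he, _⟩ | ⟨he, _⟩;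
         rcases abs_cases (-(G.dist x0 x : ℤ) - 0) with ⟨he, _⟩ | ⟨he, _⟩] <;>
        rw [he] <;> omega
  · by_cases hy2 : 2*n1 ≤ G.dist x0 y
    · -- x low, y high
      simp only [TS.phi, if_neg hx2, if_pos hy2]
      by_cases hσy : TS.sigma G x0 a1 n1 r1 y <;>
        simp only [if_pos, if_neg, hσy, if_true, if_false] <;>
        [rcases abs_cases ((0:ℤ) - (G.dist x0 y : ℤ)) with ⟨he, _⟩ | ⟨he, _⟩;
         rcases abs_cases ((0:ℤ) - -(G.dist x0 y : ℤ)) with ⟨he, _⟩ | ⟨he, _⟩] <;>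
        rw [he] <;> omega
    · -- both low
      simp only [TS.phi, if_neg hx2, if_neg hy2]
      simp only [sub_zero, abs_zero]
      omega
end Phi
/-- Theorem 1 (classification): a connected graph admits a 2-selector iff it is
bounded or coarsely equivalent (quasi-isometric) to `ℕ` or to `ℤ`. -/
theorem graph_two_selector_iff {V : Type*} (G : SimpleGraph V) (hG : G.Connected) :
    (∃ f : V → V → V, IsTwoSelector G f) ↔
      ((∃ D : ℕ, ∀ u v : V, G.dist u v ≤ D) ∨
       (∃ φ : V → ℕ, QIWith (fun u v : V => (G.dist u v : ℝ)) (fun m n : ℕ => dist m n) φ) ∨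
       (∃ φ : V → ℤ, QIWith (fun u v : V => (G.dist u v : ℝ)) (fun m n : ℤ => dist m n) φ)) := by
  constructor
  · rintro ⟨f, hsym, hsel, hmodall⟩
    obtain ⟨r1, hmod⟩ := hmodall 1
    by_cases hbdd : ∃ D : ℕ, ∀ u v : V, G.dist u v ≤ D
    · exact Or.inl hbdd
    right
    obtain ⟨x0⟩ := hG.nonempty
    push_neg at hbdd
    have hsph : ∀ n : ℕ, ∃ v : V, G.dist x0 v = n := by
      intro n
      obtain ⟨u, v, huv⟩ := hbdd (2*n)
      have t : G.dist u v ≤ G.dist u x0 + G.dist x0 v := hG.dist_triangle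
      have c : G.dist u x0 = G.dist x0 u := SimpleGraph.dist_comm
      have hor : n ≤ G.dist x0 u ∨ n ≤ G.dist x0 v := by omega
      rcases hor with h | h
      · obtain ⟨z, hz, -⟩ := TS.exists_proj hG x0 u h
        exact ⟨z, hz⟩
      · obtain ⟨z, hz, -⟩ := TS.exists_proj hG x0 v h
        exact ⟨z, hz⟩
    by_cases hA : ∃ N, ∀ n, N ≤ n → ∀ x y : V,
        G.dist x0 x = n → G.dist x0 y = n → G.dist x y ≤ 2*r1+2
    · -- Case A : quasi-isometric to ℕ
      refine Or.inl ?_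
      obtain ⟨N, hN⟩ := hA
      have hkey : ∀ x y : V, G.dist x0 x ≤ G.dist x0 y →
          G.dist x y ≤ (G.dist x0 y - G.dist x0 x) + (2*N + 2*r1+2) := by
        intro x y hle
        obtain ⟨z, hz1, hz2⟩ := TS.exists_proj hG x0 y hle
        have t : G.dist x y ≤ G.dist x z + G.dist z y := hG.dist_triangle
        by_cases hcase : N ≤ G.dist x0 x
        · have := hN _ hcase x z rfl hz1
          omega
        · have t2 : G.dist x z ≤ G.dist x x0 + G.dist x0 z := hG.dist_triangle
          have c : G.dist x x0 = G.dist x0 x := SimpleGraph.dist_comm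
          omega
      refine ⟨fun v => G.dist x0 v, 1, ((2*N + 2*r1+2 : ℕ) : ℝ), le_refl 1, by positivity,
        ?_, ?_⟩
      · intro x y
        have t1 : G.dist x0 x ≤ G.dist x0 y + G.dist y x := hG.dist_triangle
        have t2 : G.dist x0 y ≤ G.dist x0 x + G.dist x y := hG.dist_triangle
        have c1 : G.dist y x = G.dist x y := SimpleGraph.dist_comm
        have h0 : (0:ℝ) ≤ ((2*N + 2*r1+2 : ℕ) : ℝ) := by positivity
        constructor
        · show dist (G.dist x0 x) (G.dist x0 y) ≤ 1 * (G.dist x y : ℝ) + ((2*N + 2*r1+2 : ℕ) : ℝ)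
          rw [Nat.dist_eq, abs_sub_le_iff]
          constructor
          · have hc : (G.dist x0 x : ℝ) ≤ G.dist x0 y + G.dist x y := by
              exact_mod_cast (by omega : G.dist x0 x ≤ G.dist x0 y + G.dist x y)
            linarith
          · have hc : (G.dist x0 y : ℝ) ≤ G.dist x0 x + G.dist x y := by
              exact_mod_cast t2
            linarith
        · show (G.dist x y : ℝ) ≤ 1 * dist (G.dist x0 x) (G.dist x0 y) + ((2*N + 2*r1+2 : ℕ) : ℝ)
          rw [Nat.dist_eq]
          rcases le_total (G.dist x0 x) (G.dist x0 y) with h | h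
          · have hk := hkey x y h
            have habs : |(G.dist x0 x : ℝ) - (G.dist x0 y : ℝ)|
                = ((G.dist x0 y - G.dist x0 x : ℕ) : ℝ) := by
              rw [abs_sub_comm, abs_of_nonneg (sub_nonneg.mpr (by exact_mod_cast h)),
                Nat.cast_sub h]
            rw [habs]
            have hc : (G.dist x y : ℝ) ≤ ((G.dist x0 y - G.dist x0 x : ℕ) : ℝ)
                + ((2*N + 2*r1+2 : ℕ) : ℝ) := by exact_mod_cast hk
            linarith
          · have hk := hkey y x h
            rw [c1] at hk
            have habs : |(G.dist x0 x : ℝ) - (G.dist x0 y : ℝ)|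
                = ((G.dist x0 x - G.dist x0 y : ℕ) : ℝ) := by
              rw [abs_of_nonneg (sub_nonneg.mpr (by exact_mod_cast h)), Nat.cast_sub h]
            rw [habs]
            have hc : (G.dist x y : ℝ) ≤ ((G.dist x0 x - G.dist x0 y : ℕ) : ℝ)
                + ((2*N + 2*r1+2 : ℕ) : ℝ) := by exact_mod_cast hk
            linarith
      · intro m
        obtain ⟨v, hv⟩ := hsph m
        refine ⟨v, ?_⟩
        show dist m (G.dist x0 v) ≤ ((2*N + 2*r1+2 : ℕ) : ℝ)
        rw [hv, _root_.dist_self]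
        positivity
    · -- Case B : quasi-isometric to ℤ
      refine Or.inr ?_
      push_neg at hA
      obtain ⟨n1, hn1, a1, b1, ha1, hb1, hfar1⟩ := hA (10*r1+100)
      refine ⟨TS.phi G x0 a1 n1 r1, 1, ((8*n1+8*r1+8 : ℕ) : ℝ), le_refl 1, by positivity,
        ?_, ?_⟩
      · intro x y
        obtain ⟨m1, m2⟩ := TS.phi_bound hG hsym hsel hmod ha1 hn1 x y
        have h0 : (0:ℝ) ≤ ((8*n1+8*r1+8 : ℕ) : ℝ) := by positivity
        constructor
        · show dist (TS.phi G x0 a1 n1 r1 x) (TS.phi G x0 a1 n1 r1 y)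
            ≤ 1 * (G.dist x y : ℝ) + ((8*n1+8*r1+8 : ℕ) : ℝ)
          rw [Int.dist_eq]
          have hc := (Int.cast_le (R := ℝ)).mpr m1
          push_cast at hc ⊢
          linarith
        · show (G.dist x y : ℝ) ≤ 1 * dist (TS.phi G x0 a1 n1 r1 x) (TS.phi G x0 a1 n1 r1 y)
            + ((8*n1+8*r1+8 : ℕ) : ℝ)
          rw [Int.dist_eq]
          have hc := (Int.cast_le (R := ℝ)).mpr m2
          push_cast at hc ⊢
          linarith
      · intro yz
        rcases le_or_gt (2*(n1:ℤ)) yz with hy | hy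
        · obtain ⟨u, v, hu, hv, hσu, hσv⟩ := TS.both_signs hG hsym hsel hmod ha1 hn1 hA
            (m := yz.toNat) (by omega)
          refine ⟨u, ?_⟩
          have hm2 : 2*n1 ≤ yz.toNat := by omega
          have hφ : TS.phi G x0 a1 n1 r1 u = (yz.toNat : ℤ) := by
            simp only [TS.phi, hu, if_pos hm2, if_pos hσu]
          show dist yz (TS.phi G x0 a1 n1 r1 u) ≤ ((8*n1+8*r1+8 : ℕ) : ℝ)
          rw [hφ]
          have he : (yz.toNat : ℤ) = yz := Int.toNat_of_nonneg (by omega)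
          rw [he, _root_.dist_self]
          positivity
        · rcases le_or_gt yz (-(2*(n1:ℤ))) with hy' | hy'
          · obtain ⟨u, v, hu, hv, hσu, hσv⟩ := TS.both_signs hG hsym hsel hmod ha1 hn1 hA
              (m := (-yz).toNat) (by omega)
            refine ⟨v, ?_⟩
            have hm2 : 2*n1 ≤ (-yz).toNat := by omega
            have hφ : TS.phi G x0 a1 n1 r1 v = -((-yz).toNat : ℤ) := by
              simp only [TS.phi, hv, if_pos hm2, if_neg hσv]
            show dist yz (TS.phi G x0 a1 n1 r1 v) ≤ ((8*n1+8*r1+8 : ℕ) : ℝ)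
            rw [hφ]
            have he : ((-yz).toNat : ℤ) = -yz := Int.toNat_of_nonneg (by omega)
            rw [he, neg_neg, _root_.dist_self]
            positivity
          · refine ⟨x0, ?_⟩
            have h00 : G.dist x0 x0 = 0 := SimpleGraph.dist_self
            have hφ : TS.phi G x0 a1 n1 r1 x0 = 0 := by
              simp only [TS.phi, h00]
              rw [if_neg]
              omega
            show dist yz (TS.phi G x0 a1 n1 r1 x0) ≤ ((8*n1+8*r1+8 : ℕ) : ℝ)
            rw [hφ]
            have hb : |yz| ≤ (8*n1+8*r1+8 : ℤ) := by
              rw [abs_le]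
              constructor <;> omega
            have hc := (Int.cast_le (R := ℝ)).mpr hb
            push_cast at hc
            rw [Int.dist_eq]
            push_cast
            rw [sub_zero]
            linarith
  · rintro (⟨D, hD⟩ | ⟨φ, L, C, hL, hC, hpair, hcob⟩ | ⟨φ, L, C, hL, hC, hpair, hcob⟩)
    · refine TS.selector_of_embed hG (ψ := fun _ => (0:ℝ)) (L := 1) (C := (D:ℝ)) le_rfl
        (by positivity) ?_ ?_
      · intro x y
        simp only [sub_self, abs_zero, one_mul]
        positivity
      · intro x y
        simp only [sub_self, abs_zero, one_mul, mul_zero, zero_add]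
        exact_mod_cast hD x y
    · refine TS.selector_of_embed hG (ψ := fun v => ((φ v : ℕ) : ℝ)) hL hC ?_ ?_
      · intro x y
        have h := (hpair x y).1
        simp only [Nat.dist_eq] at h
        exact h
      · intro x y
        have h := (hpair x y).2
        simp only [Nat.dist_eq] at h
        exact h
    · refine TS.selector_of_embed hG (ψ := fun v => ((φ v : ℤ) : ℝ)) hL hC ?_ ?_
      · intro x y
        have h := (hpair x y).1
        simp only [Int.dist_eq] at h
        exact h
      · intro x y
        have h := (hpair x y).2
        simp only [Int.dist_eq] at h
        exact h
end

section
/- For a connected graph Γ, the existence of a bornologous selector is equivalent to the existence of a 2-selector. -/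
/-- A subset of a graph is bounded if it has finite diameter in the path metric. -/
def GBounded {V : Type*} (G : SimpleGraph V) (A : Set V) : Prop :=
  ∃ D : ℕ, ∀ a ∈ A, ∀ b ∈ A, G.dist a b ≤ D

/-- `d_H(A,B) ≤ r` for subsets `A, B` in the path metric. -/
def hdLE {V : Type*} (G : SimpleGraph V) (A B : Set V) (r : ℕ) : Prop :=
  (∀ a ∈ A, ∃ b ∈ B, G.dist a b ≤ r) ∧ (∀ b ∈ B, ∃ a ∈ A, G.dist a b ≤ r)

/-- A bornologous selector: a macro-uniform choice of a point from every nonempty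
bounded subset. -/
def IsBornSelector {V : Type*} (G : SimpleGraph V) (f : Set V → V) : Prop :=
  (∀ A : Set V, A.Nonempty → GBounded G A → f A ∈ A) ∧
  (∀ r : ℕ, ∃ r' : ℕ, ∀ A B : Set V, A.Nonempty → GBounded G A →
      B.Nonempty → GBounded G B → hdLE G A B r → G.dist (f A) (f B) ≤ r')

namespace BornSel

open SimpleGraph

variable {V : Type*} {G : SimpleGraph V}

lemma dself (v : V) : G.dist v v = 0 := by simp

/-- A geodesic parametrization from `u` to `v`. -/
lemma exists_geo (hG : G.Connected) (u v : V) :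
    ∃ γ : ℕ → V, γ 0 = u ∧ (∀ i, G.dist (γ i) (γ (i+1)) ≤ 1) ∧
      (∀ i, G.dist u (γ i) ≤ i) ∧
      (∀ i, G.dist (γ i) v ≤ G.dist u v - i) ∧
      (∀ i j, i ≤ j → G.dist (γ i) (γ j) ≤ j - i) := by
  obtain ⟨p, hp⟩ := hG.exists_walk_length_eq_dist u v
  have hstep : ∀ i, G.dist (p.getVert i) (p.getVert (i+1)) ≤ 1 := by
    intro i
    by_cases hi : i < p.length
    · exact le_of_eq ((dist_eq_one_iff_adj).mpr (p.adj_getVert_succ hi))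
    · push_neg at hi
      have h1 : p.getVert i = v := p.getVert_of_length_le hi
      have h2 : p.getVert (i+1) = v := p.getVert_of_length_le (by omega)
      rw [h1, h2, dself]; omega
  have hseg : ∀ j i, i ≤ j → G.dist (p.getVert i) (p.getVert j) ≤ j - i := by
    intro j
    induction j with
    | zero => intro i hi; have : i = 0 := by omega
              subst this; rw [dself]
    | succ n ih =>
      intro i hi
      rcases Nat.lt_or_ge i (n+1) with h | h
      · have h1 := ih i (by omega)
        calc G.dist (p.getVert i) (p.getVert (n+1)) ≤
            G.dist (p.getVert i) (p.getVert n) + G.dist (p.getVert n) (p.getVert (n+1)) :=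
              hG.dist_triangle
          _ ≤ (n - i) + 1 := by gcongr; exact hstep n
          _ ≤ n + 1 - i := by omega
      · have : i = n + 1 := by omega
        subst this; rw [dself]; exact Nat.zero_le _
  have hup : ∀ i, G.dist u (p.getVert i) ≤ i := by
    intro i
    have := hseg i 0 (Nat.zero_le i)
    rw [p.getVert_zero] at this; omega
  have hdown : ∀ i, G.dist (p.getVert i) v ≤ G.dist u v - i := by
    intro i
    by_cases hi : i ≤ p.length
    · have := hseg p.length i hi
      rw [p.getVert_length] at this; omega
    · rw [p.getVert_of_length_le (by omega), dself]; omega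
  exact ⟨fun i => p.getVert i, p.getVert_zero, hstep, hup, hdown, fun i j h => hseg j i h⟩

/-- Two points of a pair can be moved (one coordinate at a time, unit steps),
keeping separation at least `s`. -/
def Conn (G : SimpleGraph V) (s : ℕ) (a b c e : V) : Prop :=
  ∃ (N : ℕ) (P Q : ℕ → V), P 0 = a ∧ Q 0 = b ∧ P N = c ∧ Q N = e ∧
    (∀ i, i < N → G.dist (P i) (P (i+1)) ≤ 1 ∧ G.dist (Q i) (Q (i+1)) ≤ 1) ∧
    (∀ i, i ≤ N → s ≤ G.dist (P i) (Q i))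

lemma Conn.trans {s : ℕ} {a b c e x y : V} (h1 : Conn G s a b c e) (h2 : Conn G s c e x y) :
    Conn G s a b x y := by
  obtain ⟨N, P, Q, hP0, hQ0, hPN, hQN, hst, hsep⟩ := h1
  obtain ⟨N', P', Q', hP0', hQ0', hPN', hQN', hst', hsep'⟩ := h2
  refine ⟨N + N', fun i => if i ≤ N then P i else P' (i - N),
    fun i => if i ≤ N then Q i else Q' (i - N), ?_, ?_, ?_, ?_, ?_, ?_⟩
  · simp [hP0]
  · simp [hQ0]
  · show (if N + N' ≤ N then P (N + N') else P' (N + N' - N)) = x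
    rcases Nat.eq_zero_or_pos N' with h | h
    · subst h
      rw [if_pos (by omega)]
      rw [(by omega : N + 0 = N), hPN, ← hP0', hPN']
    · rw [if_neg (by omega), (by omega : N + N' - N = N'), hPN']
  · show (if N + N' ≤ N then Q (N + N') else Q' (N + N' - N)) = y
    rcases Nat.eq_zero_or_pos N' with h | h
    · subst h
      rw [if_pos (by omega)]
      rw [(by omega : N + 0 = N), hQN, ← hQ0', hQN']
    · rw [if_neg (by omega), (by omega : N + N' - N = N'), hQN']
  · intro i hi
    show G.dist (if i ≤ N then P i else P' (i - N)) (if i + 1 ≤ N then P (i+1) else P' (i + 1 - N)) ≤ 1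
        ∧ G.dist (if i ≤ N then Q i else Q' (i - N)) (if i + 1 ≤ N then Q (i+1) else Q' (i + 1 - N)) ≤ 1
    rcases Nat.lt_or_ge i N with h | h
    · constructor
      · rw [if_pos (by omega), if_pos (by omega)]
        exact (hst i h).1
      · rw [if_pos (by omega), if_pos (by omega)]
        exact (hst i h).2
    · rcases Nat.eq_or_lt_of_le h with h' | h'
      · subst h'
        constructor
        · rw [if_pos le_rfl, if_neg (by omega), (by omega : N + 1 - N = 1), hPN, ← hP0']
          exact (hst' 0 (by omega)).1
        · rw [if_pos le_rfl, if_neg (by omega), (by omega : N + 1 - N = 1), hQN, ← hQ0']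
          exact (hst' 0 (by omega)).2
      · constructor
        · rw [if_neg (by omega), if_neg (by omega), (by omega : i + 1 - N = (i - N) + 1)]
          exact (hst' (i - N) (by omega)).1
        · rw [if_neg (by omega), if_neg (by omega), (by omega : i + 1 - N = (i - N) + 1)]
          exact (hst' (i - N) (by omega)).2
  · intro i hi
    show s ≤ G.dist (if i ≤ N then P i else P' (i - N)) (if i ≤ N then Q i else Q' (i - N))
    rcases le_or_gt i N with h | h
    · rw [if_pos h, if_pos h]; exact hsep i h
    · rw [if_neg (by omega), if_neg (by omega)]; exact hsep' (i - N) (by omega)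

lemma Conn.swap {s : ℕ} {a b c e : V} (h : Conn G s a b c e) : Conn G s b a e c := by
  obtain ⟨N, P, Q, hP0, hQ0, hPN, hQN, hst, hsep⟩ := h
  exact ⟨N, Q, P, hQ0, hP0, hQN, hPN, fun i hi => (hst i hi).symm,
    fun i hi => (dist_comm (G := G) ▸ hsep i hi)⟩

/-- Move the second coordinate from `b` to `b'` with `a` fixed. -/
lemma conn_moveQ (hG : G.Connected) {s : ℕ} (a b b' : V)
    (h : G.dist b b' + 2 * s ≤ G.dist a b + G.dist a b') : Conn G s a b a b' := by
  obtain ⟨γ, hγ0, hstep, hup, hdown, -⟩ := exists_geo hG b b'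
  refine ⟨G.dist b b', fun _ => a, γ, rfl, hγ0, rfl, ?_,
    fun i _ => ⟨by rw [dself]; exact Nat.zero_le _, hstep i⟩, ?_⟩
  · have h0 := hdown (G.dist b b')
    rw [Nat.sub_self] at h0
    exact hG.dist_eq_zero_iff.mp (by omega)
  · intro i hi
    have t1 : G.dist a b ≤ G.dist a (γ i) + G.dist (γ i) b := hG.dist_triangle
    have t2 : G.dist a b' ≤ G.dist a (γ i) + G.dist (γ i) b' := hG.dist_triangle
    have t3 : G.dist (γ i) b = G.dist b (γ i) := dist_comm
    have t4 := hup i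
    have t5 := hdown i
    show s ≤ G.dist a (γ i)
    omega

lemma conn_moveP (hG : G.Connected) {s : ℕ} (a a' b : V)
    (h : G.dist a a' + 2 * s ≤ G.dist b a + G.dist b a') : Conn G s a b a' b :=
  (conn_moveQ hG b a a' h).swap



section Swap

variable {f : V → V → V} {ρ : ℕ}

/-- Side stability along a `Conn` journey. -/
lemma stability (hG : G.Connected)
    (hsel : ∀ a b, f a b = a ∨ f a b = b)
    (hmod : ∀ a b c e, pairHdist G.dist a b c e ≤ 1 → G.dist (f a b) (f c e) ≤ ρ)
    (hρ : 1 ≤ ρ) {a b c e : V}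
    (hc : Conn G (2 * ρ + 1) a b c e) (hab : f a b = a) : f c e = c := by
  obtain ⟨N, P, Q, hP0, hQ0, hPN, hQN, hst, hsep⟩ := hc
  subst hP0 hQ0 hPN hQN
  have key : ∀ i, i ≤ N → f (P i) (Q i) = P i := by
    intro i
    induction i with
    | zero => intro _; exact hab
    | succ n ih =>
      intro hn
      have hfn := ih (by omega)
      have hpd : pairHdist G.dist (P n) (Q n) (P (n+1)) (Q (n+1)) ≤ 1 := by
        have h1 := (hst n (by omega)).1
        have h2 := (hst n (by omega)).2
        simp only [pairHdist, max_le_iff]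
        refine ⟨⟨le_trans (min_le_left _ _) h1, le_trans (min_le_right _ _) h2⟩,
          ⟨le_trans (min_le_left _ _) h1, le_trans (min_le_right _ _) h2⟩⟩
      have hfd := hmod _ _ _ _ hpd
      rw [hfn] at hfd
      rcases hsel (P (n+1)) (Q (n+1)) with h | h
      · exact h
      · exfalso
        rw [h] at hfd
        have t1 : G.dist (P (n+1)) (Q (n+1)) ≤
            G.dist (P (n+1)) (P n) + G.dist (P n) (Q (n+1)) := hG.dist_triangle
        have t2 : G.dist (P (n+1)) (P n) = G.dist (P n) (P (n+1)) := dist_comm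
        have t3 := (hst n (by omega)).1
        have t4 := hsep (n+1) (by omega)
        omega
  exact key N le_rfl

/-- A pair cannot be swapped along a well-separated journey. -/
lemma no_swap (hG : G.Connected)
    (hsym : ∀ a b, f a b = f b a)
    (hsel : ∀ a b, f a b = a ∨ f a b = b)
    (hmod : ∀ a b c e, pairHdist G.dist a b c e ≤ 1 → G.dist (f a b) (f c e) ≤ ρ)
    (hρ : 1 ≤ ρ) {a b : V}
    (hc : Conn G (2 * ρ + 1) a b b a) : False := by
  have hab : 2 * ρ + 1 ≤ G.dist a b := by
    obtain ⟨N, P, Q, hP0, hQ0, _, _, _, hsep⟩ := hc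
    have := hsep 0 (Nat.zero_le N); rwa [hP0, hQ0] at this
  have hne : a ≠ b := by
    intro h; subst h; rw [dself] at hab; omega
  rcases hsel a b with h | h
  · have := stability hG hsel hmod hρ hc h
    rw [hsym b a] at this
    rw [h] at this
    exact hne this
  · have h' : f b a = b := by rw [← hsym]; exact h
    have := stability hG hsel hmod hρ hc.swap h'
    exact hne (this.symm.trans h)

/-- Trichotomy: the three "Gromov-type" quantities of a triple cannot all be large. -/
lemma trichotomy (hG : G.Connected)
    (hsym : ∀ a b, f a b = f b a)
    (hsel : ∀ a b, f a b = a ∨ f a b = b)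
    (hmod : ∀ a b c e, pairHdist G.dist a b c e ≤ 1 → G.dist (f a b) (f c e) ≤ ρ)
    (hρ : 1 ≤ ρ) (x a b : V)
    (h1 : G.dist x b + 2 * (2 * ρ + 1) ≤ G.dist a b + G.dist x a)
    (h2 : G.dist x a + 2 * (2 * ρ + 1) ≤ G.dist a b + G.dist x b)
    (h3 : G.dist a b + 2 * (2 * ρ + 1) ≤ G.dist x a + G.dist x b) : False := by
  set s := 2 * ρ + 1 with hs
  apply no_swap hG hsym hsel hmod hρ (a := a) (b := b)
  have e1 : G.dist a x = G.dist x a := dist_comm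
  have e2 : G.dist b x = G.dist x b := dist_comm
  have e3 : G.dist b a = G.dist a b := dist_comm
  have c1 : Conn G s a b a x := conn_moveQ hG _ _ _ (by omega)
  have c2 : Conn G s a x b x := conn_moveP hG _ _ _ (by omega)
  have c3 : Conn G s b x b a := conn_moveQ hG _ _ _ (by omega)
  exact (c1.trans c2).trans c3

/-- No three pairwise-far points on a common sphere. -/
lemma no_three (hG : G.Connected)
    (hsym : ∀ a b, f a b = f b a)
    (hsel : ∀ a b, f a b = a ∨ f a b = b)
    (hmod : ∀ a b c e, pairHdist G.dist a b c e ≤ 1 → G.dist (f a b) (f c e) ≤ ρ)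
    (hρ : 1 ≤ ρ) (x a b c : V) {n : ℕ}
    (hna : G.dist x a = n) (hnb : G.dist x b = n) (hnc : G.dist x c = n)
    (hab : 2 * (2 * ρ + 1) ≤ G.dist a b) (hac : 2 * (2 * ρ + 1) ≤ G.dist a c)
    (hbc : 2 * (2 * ρ + 1) ≤ G.dist b c) : False := by
  set s := 2 * ρ + 1 with hs
  apply no_swap hG hsym hsel hmod hρ (a := a) (b := b)
  have e1 : G.dist a x = G.dist x a := dist_comm
  have e2 : G.dist b x = G.dist x b := dist_comm
  have e3 : G.dist c x = G.dist x c := dist_comm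
  have e4 : G.dist b a = G.dist a b := dist_comm
  have e5 : G.dist c a = G.dist a c := dist_comm
  have e6 : G.dist c b = G.dist b c := dist_comm
  have c1 : Conn G s a b a x := conn_moveQ hG _ _ _ (by omega)
  have c2 : Conn G s a x a c := conn_moveQ hG _ _ _ (by omega)
  have c3 : Conn G s a c x c := conn_moveP hG _ _ _ (by omega)
  have c4 : Conn G s x c b c := conn_moveP hG _ _ _ (by omega)
  have c5 : Conn G s b c b x := conn_moveQ hG _ _ _ (by omega)
  have c6 : Conn G s b x b a := conn_moveQ hG _ _ _ (by omega)
  exact ((((c1.trans c2).trans c3).trans c4).trans c5).trans c6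

/-- Projection rigidity (config II): if `u` lies on a geodesic from `x0` to `x` at
radius `R`, and `y` is a point at radius `R` with `d(x,y) ≤ (rad x - R) + 2s`,
then `d(u,y) ≤ 4s`, provided `s ≤ R`. -/
lemma projection (hG : G.Connected)
    (hsym : ∀ a b, f a b = f b a)
    (hsel : ∀ a b, f a b = a ∨ f a b = b)
    (hmod : ∀ a b c e, pairHdist G.dist a b c e ≤ 1 → G.dist (f a b) (f c e) ≤ ρ)
    (hρ : 1 ≤ ρ) (x0 x u y : V) {R : ℕ}
    (hsR : 2 * ρ + 1 ≤ R)
    (hu1 : G.dist x0 u = R) (hu2 : G.dist u x + R = G.dist x0 x)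
    (hy : G.dist x0 y = R)
    (hxy : G.dist x y + R ≤ G.dist x0 x + 2 * (2 * ρ + 1)) :
    G.dist u y ≤ 4 * (2 * ρ + 1) := by
  set s := 2 * ρ + 1 with hs
  by_contra hbig
  push_neg at hbig
  have e1 : G.dist u y = G.dist y u := dist_comm
  have e2 : G.dist u x0 = G.dist x0 u := dist_comm
  have e3 : G.dist y x0 = G.dist x0 y := dist_comm
  have e4 : G.dist x u = G.dist u x := dist_comm
  have e5 : G.dist x x0 = G.dist x0 x := dist_comm
  have e6 : G.dist x y = G.dist y x := dist_comm
  -- case: x is close to radius R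
  by_cases hcase : G.dist x0 x < R + s
  · have t1 : G.dist u y ≤ G.dist u x + G.dist x y := hG.dist_triangle
    omega
  · push_neg at hcase
    apply no_swap hG hsym hsel hmod hρ (a := u) (b := y)
    have c1 : Conn G s u y u x0 := conn_moveQ hG _ _ _ (by omega)
    have c2 : Conn G s u x0 x x0 := conn_moveP hG _ _ _ (by omega)
    have c3 : Conn G s x x0 x u := conn_moveQ hG _ _ _ (by omega)
    have c4 : Conn G s x u y u := conn_moveP hG _ _ _ (by omega)
    exact ((c1.trans c2).trans c3).trans c4

end Swap

theorem two_to_born {V : Type*} {G : SimpleGraph V} (hG : G.Connected)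
    (f : V → V → V) (hf : IsTwoSelector G f) : ∃ F : Set V → V, IsBornSelector G F := by
  classical
  obtain ⟨hsym, hsel, hmod0⟩ := hf
  obtain ⟨ρ₀, hρ₀⟩ := hmod0 1
  set ρ := max ρ₀ 1 with hρdef
  have hmod : ∀ a b c e, pairHdist G.dist a b c e ≤ 1 → G.dist (f a b) (f c e) ≤ ρ :=
    fun a b c e h => le_trans (hρ₀ a b c e h) (le_max_left _ _)
  have hρ : 1 ≤ ρ := le_max_right _ _
  set s := 2 * ρ + 1 with hsdef
  set M := 2 * s with hMdef
  set R := 2 * M + 1 with hRdef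
  set C := 2 * R + M with hCdef
  have hne : Nonempty V := hG.nonempty
  set x0 : V := Classical.arbitrary V with hx0
  choose γ hγ0 hstep hup hdown hseg using fun x : V => exists_geo hG x0 x
  -- exact radius of geodesic points
  have hradp : ∀ (x : V) (k : ℕ), k ≤ G.dist x0 x →
      G.dist x0 (γ x k) = k ∧ G.dist (γ x k) x + k = G.dist x0 x := by
    intro x k hk
    have h1 := hup x k
    have h2 := hdown x k
    have h3 : G.dist x0 x ≤ G.dist x0 (γ x k) + G.dist (γ x k) x := hG.dist_triangle
    constructor <;> omega
  -- base far point
  set w : V := if h : ∃ z, R ≤ G.dist x0 z then γ h.choose R else x0 with hwdef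
  have hw : (∃ z, R ≤ G.dist x0 z) → G.dist x0 w = R := by
    intro h
    rw [hwdef, dif_pos h]
    exact (hradp h.choose R h.choose_spec).1
  -- metric basics
  have hLip : ∀ x y : V, G.dist x0 y ≤ G.dist x0 x + G.dist x y ∧
      G.dist x0 x ≤ G.dist x0 y + G.dist x y := by
    intro x y
    have t1 : G.dist x0 y ≤ G.dist x0 x + G.dist x y := hG.dist_triangle
    have t2 : G.dist x0 x ≤ G.dist x0 y + G.dist y x := hG.dist_triangle
    have e : G.dist y x = G.dist x y := SimpleGraph.dist_comm
    exact ⟨by omega, by omega⟩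
  have hSum : ∀ x y : V, G.dist x y ≤ G.dist x0 x + G.dist x0 y := by
    intro x y
    have t1 : G.dist x y ≤ G.dist x x0 + G.dist x0 y := hG.dist_triangle
    have e : G.dist x x0 = G.dist x0 x := SimpleGraph.dist_comm
    omega
  -- dichotomy for points on a common sphere
  have hDich : ∀ a b : V, G.dist x0 a = G.dist x0 b →
      G.dist a b < M ∨ 2 * G.dist x0 a < G.dist a b + M := by
    intro a b hrab
    by_contra hcon
    push_neg at hcon
    obtain ⟨hc1, hc2⟩ := hcon
    exact trichotomy hG hsym hsel hmod hρ x0 a b (by omega) (by omega) (by omega)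
  -- projection rigidity
  have hProj : ∀ x y : V, R ≤ G.dist x0 x → G.dist x0 y = R →
      G.dist x y + R ≤ G.dist x0 x + M → G.dist (γ x R) y ≤ 2 * M := by
    intro x y hx hy hxy
    have h1 := (hradp x R hx).1
    have h2 := (hradp x R hx).2
    have := projection hG hsym hsel hmod hρ x0 x (γ x R) y (by omega) h1 (by omega) hy (by omega)
    omega
  -- at most two clusters at radius R
  have hTwoCl : ∀ a b : V, G.dist x0 a = R → G.dist x0 b = R → M < G.dist a b →
      M < G.dist a w → M < G.dist b w → False := by
    intro a b ha hb hab haw hbw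
    have hex : ∃ z, R ≤ G.dist x0 z := ⟨a, le_of_eq ha.symm⟩
    exact no_three hG hsym hsel hmod hρ x0 a b w ha hb (hw hex)
      (by omega) (by omega) (by omega)
  -- same-side points at radius R are uniformly close
  have hCl : ∀ a b : V, G.dist x0 a = R → G.dist x0 b = R →
      ((G.dist a w ≤ M ∧ G.dist b w ≤ M) ∨ (M < G.dist a w ∧ M < G.dist b w)) →
      G.dist a b ≤ 2 * M := by
    intro a b ha hb hcase
    rcases hcase with ⟨h1, h2⟩ | ⟨h1, h2⟩
    · have t : G.dist a b ≤ G.dist a w + G.dist w b := hG.dist_triangle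
      have e : G.dist w b = G.dist b w := SimpleGraph.dist_comm
      omega
    · by_contra hcon
      push_neg at hcon
      exact hTwoCl a b ha hb (by omega) h1 h2
  -- (A) same-sign points lie along a common ray
  have hSame : ∀ x y : V, R ≤ G.dist x0 y → G.dist x0 y ≤ G.dist x0 x →
      ((G.dist (γ x R) w ≤ M ∧ G.dist (γ y R) w ≤ M) ∨
        (M < G.dist (γ x R) w ∧ M < G.dist (γ y R) w)) →
      G.dist x y + G.dist x0 y ≤ G.dist x0 x + M := by
    intro x y hy hyx hsgn
    have hx : R ≤ G.dist x0 x := le_trans hy hyx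
    set k := G.dist x0 y with hk
    have hu1 := (hradp x k hyx).1
    have hu2 := (hradp x k hyx).2
    have hpx := hradp x R hx
    have hpy := hradp y R hy
    have hclR : G.dist (γ x R) (γ y R) ≤ 2 * M := hCl _ _ hpx.1 hpy.1 hsgn
    -- d(u, y) is small, where u = γ x k
    have hseg1 : G.dist (γ x R) (γ x k) ≤ k - R := hseg x R k hy
    have hdy : G.dist (γ y R) y ≤ k - R := by
      have := hpy.2; omega
    have t1 : G.dist (γ x k) y ≤ G.dist (γ x k) (γ x R) + G.dist (γ x R) y :=
      hG.dist_triangle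
    have t2 : G.dist (γ x R) y ≤ G.dist (γ x R) (γ y R) + G.dist (γ y R) y :=
      hG.dist_triangle
    have e1 : G.dist (γ x k) (γ x R) = G.dist (γ x R) (γ x k) := SimpleGraph.dist_comm
    have hduy : G.dist (γ x k) y ≤ 2 * k + 2 * M - 2 * R := by omega
    have hdich := hDich (γ x k) y (by rw [hu1])
    rw [hu1] at hdich
    have hduy2 : G.dist (γ x k) y < M := by omega
    have t3 : G.dist x y ≤ G.dist x (γ x k) + G.dist (γ x k) y := hG.dist_triangle
    have e2 : G.dist x (γ x k) = G.dist (γ x k) x := SimpleGraph.dist_comm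
    omega
  -- (B) opposite-sign far points are far apart
  have hOpp : ∀ x y : V, R ≤ G.dist x0 x → R ≤ G.dist x0 y →
      ((G.dist (γ x R) w ≤ M ∧ M < G.dist (γ y R) w) ∨
        (M < G.dist (γ x R) w ∧ G.dist (γ y R) w ≤ M)) →
      G.dist x0 x + G.dist x0 y ≤ G.dist x y + M := by
    intro x y hx hy hsgn
    by_contra hcon
    push_neg at hcon
    have hpx := hradp x R hx
    have hpy := hradp y R hy
    -- trichotomy: one of the two "same-side" inequalities must fail
    have htri : G.dist x0 x + M ≤ G.dist x y + G.dist x0 y →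
        G.dist x0 y + M ≤ G.dist x y + G.dist x0 x → False := by
      intro h1 h2
      exact trichotomy hG hsym hsel hmod hρ x0 x y (by omega) (by omega) (by omega)
    -- in either case, the projections at radius R are close
    have hclose : G.dist (γ x R) (γ y R) ≤ 2 * M := by
      by_cases hcase : G.dist x y + G.dist x0 y < G.dist x0 x + M
      · -- y is on the same side as x : project y's base point onto x's ray
        have t1 : G.dist x (γ y R) ≤ G.dist x y + G.dist y (γ y R) := hG.dist_triangle
        have e1 : G.dist y (γ y R) = G.dist (γ y R) y := SimpleGraph.dist_comm
        have hppp : G.dist (γ x R) (γ y R) ≤ 2 * M :=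
          hProj x (γ y R) hx hpy.1 (by omega)
        exact hppp
      · have hcase2 : G.dist x y + G.dist x0 x < G.dist x0 y + M := by
          by_contra hcon2
          push_neg at hcon2
          exact htri (by omega) (by omega)
        have t1 : G.dist y (γ x R) ≤ G.dist y x + G.dist x (γ x R) := hG.dist_triangle
        have e1 : G.dist x (γ x R) = G.dist (γ x R) x := SimpleGraph.dist_comm
        have e2 : G.dist y x = G.dist x y := SimpleGraph.dist_comm
        have hppp : G.dist (γ y R) (γ x R) ≤ 2 * M :=
          hProj y (γ x R) hy hpx.1 (by omega)
        have e3 : G.dist (γ x R) (γ y R) = G.dist (γ y R) (γ x R) := SimpleGraph.dist_comm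
        omega
    -- but then the signs must agree: contradiction
    have hdich : ∀ a : V, G.dist x0 a = R → G.dist a w < M ∨ 2 * R < G.dist a w + M := by
      intro a ha
      have hex : ∃ z, R ≤ G.dist x0 z := ⟨x, hx⟩
      have := hDich a w (by rw [ha, hw hex])
      rw [ha] at this
      exact this
    rcases hsgn with ⟨h1, h2⟩ | ⟨h1, h2⟩
    · have t : G.dist (γ y R) w ≤ G.dist (γ y R) (γ x R) + G.dist (γ x R) w :=
        hG.dist_triangle
      have e : G.dist (γ y R) (γ x R) = G.dist (γ x R) (γ y R) := SimpleGraph.dist_comm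
      have := hdich (γ y R) hpy.1
      omega
    · have t : G.dist (γ x R) w ≤ G.dist (γ x R) (γ y R) + G.dist (γ y R) w :=
        hG.dist_triangle
      have := hdich (γ x R) hpx.1
      omega
  -- the coordinate function
  obtain ⟨φ, hφs, hφp, hφn⟩ : ∃ φ : V → ℤ,
      (∀ x, G.dist x0 x < R → φ x = (G.dist x0 x : ℤ)) ∧
      (∀ x, R ≤ G.dist x0 x → G.dist (γ x R) w ≤ M → φ x = (G.dist x0 x : ℤ)) ∧
      (∀ x, R ≤ G.dist x0 x → M < G.dist (γ x R) w → φ x = -(G.dist x0 x : ℤ)) := by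
    refine ⟨fun x => if G.dist x0 x < R then (G.dist x0 x : ℤ)
      else if G.dist (γ x R) w ≤ M then (G.dist x0 x : ℤ) else -(G.dist x0 x : ℤ),
      ?_, ?_, ?_⟩
    · intro x h; dsimp only; rw [if_pos h]
    · intro x h h2; dsimp only; rw [if_neg (by omega), if_pos h2]
    · intro x h h2; dsimp only; rw [if_neg (by omega), if_neg (by omega)]
  -- φ is 1-Lipschitz up to C
  have hUp : ∀ x y : V, φ x ≤ φ y + (G.dist x y : ℤ) + (C : ℤ) := by
    intro x y
    have hL := hLip x y
    have hS := hSum x y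
    by_cases hx : G.dist x0 x < R
    · rw [hφs x hx]
      by_cases hy : G.dist x0 y < R
      · rw [hφs y hy]; push_cast; omega
      · push_neg at hy
        by_cases hsy : G.dist (γ y R) w ≤ M
        · rw [hφp y hy hsy]; push_cast; omega
        · push_neg at hsy
          rw [hφn y hy hsy]; push_cast; omega
    · push_neg at hx
      by_cases hsx : G.dist (γ x R) w ≤ M
      · rw [hφp x hx hsx]
        by_cases hy : G.dist x0 y < R
        · rw [hφs y hy]; push_cast; omega
        · push_neg at hy
          by_cases hsy : G.dist (γ y R) w ≤ M
          · rw [hφp y hy hsy]; push_cast; omega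
          · push_neg at hsy
            rw [hφn y hy hsy]
            have := hOpp x y hx hy (Or.inl ⟨hsx, hsy⟩)
            push_cast; omega
      · push_neg at hsx
        rw [hφn x hx hsx]
        by_cases hy : G.dist x0 y < R
        · rw [hφs y hy]; push_cast; omega
        · push_neg at hy
          by_cases hsy : G.dist (γ y R) w ≤ M
          · rw [hφp y hy hsy]; push_cast; omega
          · push_neg at hsy
            rw [hφn y hy hsy]; push_cast; omega
  -- lower bound : φ distinguishes far points
  have hDown : ∀ x y : V, (G.dist x y : ℤ) ≤ (φ x - φ y) + (C : ℤ) ∨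
      (G.dist x y : ℤ) ≤ (φ y - φ x) + (C : ℤ) := by
    intro x y
    have hL := hLip x y
    have hS := hSum x y
    have hcomm : G.dist y x = G.dist x y := SimpleGraph.dist_comm
    by_cases hx : G.dist x0 x < R
    · by_cases hy : G.dist x0 y < R
      · left; rw [hφs x hx, hφs y hy]; push_cast; omega
      · push_neg at hy
        by_cases hsy : G.dist (γ y R) w ≤ M
        · right; rw [hφs x hx, hφp y hy hsy]; push_cast; omega
        · push_neg at hsy
          left; rw [hφs x hx, hφn y hy hsy]; push_cast; omega
    · push_neg at hx
      by_cases hy : G.dist x0 y < R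
      · by_cases hsx : G.dist (γ x R) w ≤ M
        · left; rw [hφp x hx hsx, hφs y hy]; push_cast; omega
        · push_neg at hsx
          right; rw [hφn x hx hsx, hφs y hy]; push_cast; omega
      · push_neg at hy
        by_cases hsx : G.dist (γ x R) w ≤ M
        · by_cases hsy : G.dist (γ y R) w ≤ M
          · -- same sign +
            by_cases hxy : G.dist x0 y ≤ G.dist x0 x
            · left
              have := hSame x y hy hxy (Or.inl ⟨hsx, hsy⟩)
              rw [hφp x hx hsx, hφp y hy hsy]; push_cast; omega
            · right
              push_neg at hxy
              have := hSame y x hx (by omega) (Or.inl ⟨hsy, hsx⟩)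
              rw [hφp x hx hsx, hφp y hy hsy]; push_cast; omega
          · push_neg at hsy
            left
            rw [hφp x hx hsx, hφn y hy hsy]; push_cast; omega
        · push_neg at hsx
          by_cases hsy : G.dist (γ y R) w ≤ M
          · right
            rw [hφn x hx hsx, hφp y hy hsy]; push_cast; omega
          · push_neg at hsy
            by_cases hxy : G.dist x0 y ≤ G.dist x0 x
            · right
              have := hSame x y hy hxy (Or.inr ⟨hsx, hsy⟩)
              rw [hφn x hx hsx, hφn y hy hsy]; push_cast; omega
            · left
              push_neg at hxy
              have := hSame y x hx (by omega) (Or.inr ⟨hsy, hsx⟩)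
              rw [hφn x hx hsx, hφn y hy hsy]; push_cast; omega
  -- minimizers exist on nonempty bounded sets
  have hmin : ∀ A : Set V, A.Nonempty → GBounded G A →
      ∃ a, a ∈ A ∧ ∀ b ∈ A, φ a ≤ φ b := by
    rintro A ⟨a₀, ha₀⟩ ⟨D, hD⟩
    obtain ⟨lb, ⟨⟨a, ha, hφa⟩, hlb⟩⟩ := Int.exists_least_of_bdd
      (P := fun z => ∃ a ∈ A, φ a = z)
      ⟨φ a₀ - ((D : ℤ) + (C : ℤ)), by
        rintro z ⟨a, ha, rfl⟩
        have h1 := hUp a₀ a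
        have h2 := hD a₀ ha₀ a ha
        omega⟩
      ⟨φ a₀, a₀, ha₀, rfl⟩
    exact ⟨a, ha, fun b hb => by rw [hφa]; exact hlb (φ b) ⟨b, hb, rfl⟩⟩
  set F : Set V → V := fun A =>
    if h : ∃ a, a ∈ A ∧ ∀ b ∈ A, φ a ≤ φ b then h.choose else x0 with hFdef
  have hFeq : ∀ (A : Set V) (h : ∃ a, a ∈ A ∧ ∀ b ∈ A, φ a ≤ φ b), F A = h.choose := by
    intro A h
    rw [hFdef]; exact dif_pos h
  refine ⟨F, ?_, ?_⟩
  · intro A hA hbA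
    have h := hmin A hA hbA
    rw [hFeq A h]
    exact h.choose_spec.1
  · intro r
    refine ⟨r + 2 * C, ?_⟩
    intro A B hA hbA hB hbB hhd
    have hminA := hmin A hA hbA
    have hminB := hmin B hB hbB
    rw [hFeq A hminA, hFeq B hminB]
    obtain ⟨haA, hamin⟩ := hminA.choose_spec
    obtain ⟨hbB, hbmin⟩ := hminB.choose_spec
    set a := hminA.choose
    set b := hminB.choose
    obtain ⟨a', ha', hda'⟩ := hhd.2 b hbB
    obtain ⟨b', hb', hdb'⟩ := hhd.1 a haA
    have le1 : φ a ≤ φ b + (r : ℤ) + (C : ℤ) := by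
      have h1 : φ a ≤ φ a' := hamin a' ha'
      have h2 := hUp a' b
      omega
    have le2 : φ b ≤ φ a + (r : ℤ) + (C : ℤ) := by
      have h1 : φ b ≤ φ b' := hbmin b' hb'
      have h2 := hUp b' a
      have hcomm : G.dist b' a = G.dist a b' := SimpleGraph.dist_comm
      omega
    rcases hDown a b with h | h <;> omega


theorem born_to_two {V : Type*} {G : SimpleGraph V} (hG : G.Connected)
    (F : Set V → V) (hF : IsBornSelector G F) : ∃ f : V → V → V, IsTwoSelector G f := by
  obtain ⟨hmem, huni⟩ := hF
  have hpair_ne : ∀ a b : V, ({a, b} : Set V).Nonempty := fun a b => ⟨a, by simp⟩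
  have hpair_bdd : ∀ a b : V, GBounded G ({a, b} : Set V) := by
    intro a b
    refine ⟨G.dist a b + G.dist b a, ?_⟩
    intro u hu v hv
    simp only [Set.mem_insert_iff, Set.mem_singleton_iff] at hu hv
    have e1 : G.dist b a = G.dist a b := SimpleGraph.dist_comm
    rcases hu with rfl | rfl <;> rcases hv with rfl | rfl <;>
      first
        | (rw [BornSel.dself]; omega)
        | omega
  refine ⟨fun a b => F {a, b}, ?_, ?_, ?_⟩
  · intro a b
    show F {a, b} = F {b, a}
    rw [Set.pair_comm]
  · intro a b
    have := hmem {a, b} (hpair_ne a b) (hpair_bdd a b)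
    simpa using this
  · intro r
    obtain ⟨r', hr'⟩ := huni r
    refine ⟨r', ?_⟩
    intro a b c e h
    apply hr' {a, b} {c, e} (hpair_ne a b) (hpair_bdd a b) (hpair_ne c e) (hpair_bdd c e)
    have h1 : min (G.dist a c) (G.dist a e) ≤ r := by
      refine le_trans ?_ h
      simp only [pairHdist]
      exact le_trans (le_max_left _ _) (le_max_left _ _)
    have h2 : min (G.dist b c) (G.dist b e) ≤ r := by
      refine le_trans ?_ h
      exact le_trans (le_max_right _ _) (le_max_left _ _)
    have h3 : min (G.dist a c) (G.dist b c) ≤ r := by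
      refine le_trans ?_ h
      exact le_trans (le_max_left _ _) (le_max_right _ _)
    have h4 : min (G.dist a e) (G.dist b e) ≤ r := by
      refine le_trans ?_ h
      exact le_trans (le_max_right _ _) (le_max_right _ _)
    constructor
    · intro u hu
      rcases hu with hu | hu
      · subst hu
        rcases le_or_gt (G.dist u c) (G.dist u e) with hce | hce
        · exact ⟨c, by simp, by simp [min_eq_left hce] at h1; omega⟩
        · exact ⟨e, by simp, by rw [min_eq_right (le_of_lt hce)] at h1; omega⟩
      · rw [Set.mem_singleton_iff] at hu
        subst hu
        rcases le_or_gt (G.dist u c) (G.dist u e) with hce | hce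
        · exact ⟨c, by simp, by rw [min_eq_left hce] at h2; omega⟩
        · exact ⟨e, by simp, by rw [min_eq_right (le_of_lt hce)] at h2; omega⟩
    · intro v hv
      rcases hv with hv | hv
      · subst hv
        rcases le_or_gt (G.dist a v) (G.dist b v) with hab | hab
        · exact ⟨a, by simp, by rw [min_eq_left hab] at h3; omega⟩
        · exact ⟨b, by simp, by rw [min_eq_right (le_of_lt hab)] at h3; omega⟩
      · rw [Set.mem_singleton_iff] at hv
        subst hv
        rcases le_or_gt (G.dist a v) (G.dist b v) with hab | hab
        · exact ⟨a, by simp, by rw [min_eq_left hab] at h4; omega⟩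
        · exact ⟨b, by simp, by rw [min_eq_right (le_of_lt hab)] at h4; omega⟩

end BornSel

/-- A connected graph admits a bornologous selector iff it admits a 2-selector. -/
theorem born_selector_iff_two_selector {V : Type*} (G : SimpleGraph V)
    (hG : G.Connected) :
    (∃ f : Set V → V, IsBornSelector G f) ↔ (∃ f : V → V → V, IsTwoSelector G f) := by
  constructor
  · rintro ⟨F, hF⟩
    exact BornSel.born_to_two hG F hF
  · rintro ⟨f, hf⟩
    exact BornSel.two_to_born hG f hf
end
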